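/- arXiv:2310.17442 — 4 statements merged into one kernel-verified Lean document; each statement's English description precedes it below -/
import Mathlib

section
/- Let X be a finitely ramified fractal and let d be an undistorted metric on X. Then there exists an undistorted metric d'' on X which is quasisymmetrically equivalent to d (the identity map (X,d) → (X,d'') is a quasisymmetry) and which satisfies the strong exponential decay condition: there exist constants 0 < r < 1 and C ≥ 1 such that r^n/C ≤ diam_{d''}(E) ≤ C·r^n for every n-cell E of X. -/
open Set

/-- A finitely ramified cell structure on a topological space `X`: a locally finite,
level-indexed family of "cells", where each cell is compact, connected, with nonempty
interior, the unique `0`-cell is all of `X`, every `(n+1)`-cell lies in some `n`-cell,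
each `n`-cell is the union of the `(n+1)`-cells it contains, two distinct cells of the
same level meet in a finite set, and every infinite descending chain of cells
intersects in a single point. -/
structure CellStructure (X : Type*) [TopologicalSpace X] where
  cells : ℕ → Set (Set X)
  finite_cells : ∀ n, (cells n).Finite
  isCompact_cells : ∀ n, ∀ E ∈ cells n, IsCompact E
  isConnected_cells : ∀ n, ∀ E ∈ cells n, IsConnected E
  interior_nonempty : ∀ n, ∀ E ∈ cells n, (interior E).Nonempty
  root : cells 0 = {Set.univ}
  exists_parent : ∀ n, ∀ E' ∈ cells (n + 1), ∃ E ∈ cells n, E' ⊆ E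
  eq_sUnion_children : ∀ n, ∀ E ∈ cells n, E = ⋃₀ {E' | E' ∈ cells (n + 1) ∧ E' ⊆ E}
  inter_finite : ∀ n, ∀ E₁ ∈ cells n, ∀ E₂ ∈ cells n, E₁ ≠ E₂ → (E₁ ∩ E₂).Finite
  descending_singleton : ∀ E : ℕ → Set X, (∀ n, E n ∈ cells n) → (∀ n, E (n + 1) ⊆ E n) →
    ∃ p : X, (⋂ n, E n) = {p}

/-- `d` is a metric (distance function) on the set `X`. -/
def IsMetricOn {X : Type*} (d : X → X → ℝ) : Prop :=
  (∀ x y, 0 ≤ d x y) ∧ (∀ x y, d x y = 0 ↔ x = y) ∧ (∀ x y, d x y = d y x) ∧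
    ∀ x y z, d x z ≤ d x y + d y z

/-- The distance function `d` induces the given topology on `X`. -/
def InducesTopology {X : Type*} [TopologicalSpace X] (d : X → X → ℝ) : Prop :=
  ∀ s : Set X, IsOpen s ↔ ∀ x ∈ s, ∃ ε > 0, ∀ y, d x y < ε → y ∈ s

/-- The diameter of a set with respect to a distance function. -/
noncomputable def sdiam {X : Type*} (d : X → X → ℝ) (S : Set X) : ℝ :=
  sSup (Set.image2 d S S)

/-- The distance between two sets with respect to a distance function. -/
noncomputable def sdist {X : Type*} (d : X → X → ℝ) (S T : Set X) : ℝ :=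
  sInf (Set.image2 d S T)

/-- The distance function `d` is `(r,R,C,δ)`-undistorted with respect to the family
of cells `cells`: exponential decay of diameter ratios of intersecting cells, and
cell separation for disjoint cells of the same level. -/
def IsUndistortedWith {X : Type*} (cells : ℕ → Set (Set X)) (d : X → X → ℝ)
    (r R C δ : ℝ) : Prop :=
  0 < r ∧ r ≤ R ∧ R < 1 ∧ 1 ≤ C ∧ 0 < δ ∧
    (∀ m n : ℕ, m ≤ n → ∀ E ∈ cells m, ∀ E' ∈ cells n, (E ∩ E').Nonempty →
      r ^ (n - m) / C ≤ sdiam d E' / sdiam d E ∧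
        sdiam d E' / sdiam d E ≤ C * R ^ (n - m)) ∧
    ∀ n : ℕ, ∀ E₁ ∈ cells n, ∀ E₂ ∈ cells n, Disjoint E₁ E₂ →
      δ * sdiam d E₁ ≤ sdist d E₁ E₂

/-- `d` is undistorted if it is `(r,R,C,δ)`-undistorted for some constants. -/
def IsUndistorted {X : Type*} (cells : ℕ → Set (Set X)) (d : X → X → ℝ) : Prop :=
  ∃ r R C δ : ℝ, IsUndistortedWith cells d r R C δ

/-- `η` is a homeomorphism of `[0,∞)` onto itself (equivalently: a continuous,
strictly increasing surjection of `[0,∞)` onto `[0,∞)` fixing `0`). -/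
def IsQSGauge (η : ℝ → ℝ) : Prop :=
  ContinuousOn η (Set.Ici 0) ∧ StrictMonoOn η (Set.Ici 0) ∧ η 0 = 0 ∧
    Set.MapsTo η (Set.Ici 0) (Set.Ici 0) ∧ Set.SurjOn η (Set.Ici 0) (Set.Ici 0)

/-- The `η`-quasisymmetry inequality for a map `f` between sets carrying
distance functions `dX` and `dY`. -/
def QSIneq {X Y : Type*} (dX : X → X → ℝ) (dY : Y → Y → ℝ) (f : X → Y) (η : ℝ → ℝ) : Prop :=
  ∀ a b c : X, a ≠ b → a ≠ c → b ≠ c →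
    dY (f a) (f b) / dY (f a) (f c) ≤ η (dX a b / dX a c)


set_option maxHeartbeats 2000000

namespace Stmt9Aux

/-- All the data of an undistorted metric on a finitely ramified cell structure. -/
structure Pack (X : Type*) [TopologicalSpace X] where
  CS : CellStructure X
  d : X → X → ℝ
  r : ℝ
  R : ℝ
  C : ℝ
  dlt : ℝ
  dnn : ∀ x y, 0 ≤ d x y
  deq : ∀ x y, d x y = 0 ↔ x = y
  dsymm : ∀ x y, d x y = d y x
  dtri : ∀ x y z, d x z ≤ d x y + d y z
  hr : 0 < r
  hrR : r ≤ R
  hR1 : R < 1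
  hC : 1 ≤ C
  hdlt : 0 < dlt
  hratio : ∀ m n : ℕ, m ≤ n → ∀ E ∈ CS.cells m, ∀ E' ∈ CS.cells n, (E ∩ E').Nonempty →
      r ^ (n - m) / C ≤ sdiam d E' / sdiam d E ∧ sdiam d E' / sdiam d E ≤ C * R ^ (n - m)
  hsep : ∀ n : ℕ, ∀ E₁ ∈ CS.cells n, ∀ E₂ ∈ CS.cells n, Disjoint E₁ E₂ →
      dlt * sdiam d E₁ ≤ sdist d E₁ E₂
  hne : Nonempty X

namespace Pack

variable {X : Type*} [TopologicalSpace X] (P : Pack X)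

lemma hR0 : 0 < P.R := lt_of_lt_of_le P.hr P.hrR

lemma hC0 : 0 < P.C := lt_of_lt_of_le one_pos P.hC

lemma root_mem : Set.univ ∈ P.CS.cells 0 := by rw [P.CS.root]; exact rfl

lemma dself (x : X) : P.d x x = 0 := (P.deq x x).mpr rfl

lemma dpos {x y : X} (h : x ≠ y) : 0 < P.d x y :=
  lt_of_le_of_ne (P.dnn x y) (fun h0 => h ((P.deq x y).mp h0.symm))

/-- diameter of the whole space -/
noncomputable def Dtop : ℝ := sdiam P.d Set.univ

lemma sdiam_nonneg (S : Set X) : 0 ≤ sdiam P.d S :=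
  Real.sSup_nonneg (by rintro v ⟨a, _, b, _, rfl⟩; exact P.dnn a b)

lemma sdist_nonneg (S T : Set X) : 0 ≤ sdist P.d S T :=
  Real.sInf_nonneg (by rintro v ⟨a, _, b, _, rfl⟩; exact P.dnn a b)

lemma Dtop_ne : P.Dtop ≠ 0 := by
  intro h0
  have hx : (Set.univ ∩ Set.univ : Set X).Nonempty := by
    obtain ⟨x⟩ := P.hne; exact ⟨x, trivial, trivial⟩
  have h := (P.hratio 0 0 le_rfl _ P.root_mem _ P.root_mem hx).1
  rw [Nat.sub_self, pow_zero] at h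
  have : sdiam P.d Set.univ / sdiam P.d Set.univ = 0 := by
    rw [show sdiam P.d (Set.univ : Set X) = P.Dtop from rfl, h0, div_zero]
  rw [this] at h
  have : (0:ℝ) < 1 / P.C := div_pos one_pos P.hC0
  linarith

lemma Dtop_pos : 0 < P.Dtop := lt_of_le_of_ne (P.sdiam_nonneg _) (Ne.symm P.Dtop_ne)

lemma bddTop : BddAbove (Set.image2 P.d Set.univ Set.univ) := by
  by_contra h
  exact P.Dtop_ne (Real.sSup_of_not_bddAbove h)

lemma bdd2 (S T : Set X) : BddAbove (Set.image2 P.d S T) :=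
  P.bddTop.mono (Set.image2_subset (Set.subset_univ S) (Set.subset_univ T))

lemma bddBelow2 (S T : Set X) : BddBelow (Set.image2 P.d S T) :=
  ⟨0, by rintro v ⟨a, _, b, _, rfl⟩; exact P.dnn a b⟩

lemma dist_le_sdiam {S : Set X} {x y : X} (hx : x ∈ S) (hy : y ∈ S) :
    P.d x y ≤ sdiam P.d S :=
  le_csSup (P.bdd2 S S) (Set.mem_image2_of_mem hx hy)

lemma sdist_le {S T : Set X} {x y : X} (hx : x ∈ S) (hy : y ∈ T) :
    sdist P.d S T ≤ P.d x y :=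
  csInf_le (P.bddBelow2 S T) (Set.mem_image2_of_mem hx hy)

lemma sdist_comm (S T : Set X) : sdist P.d S T = sdist P.d T S := by
  unfold sdist
  congr 1
  ext v
  constructor <;> rintro ⟨a, ha, b, hb, rfl⟩
  · exact ⟨b, hb, a, ha, P.dsymm b a⟩
  · exact ⟨b, hb, a, ha, P.dsymm b a⟩

lemma cell_ne {n : ℕ} {E : Set X} (hE : E ∈ P.CS.cells n) : E.Nonempty := by
  obtain ⟨x, hx⟩ := P.CS.interior_nonempty n E hE
  exact ⟨x, interior_subset hx⟩

lemma cell_pos {n : ℕ} {E : Set X} (hE : E ∈ P.CS.cells n) : 0 < sdiam P.d E := by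
  rcases lt_or_eq_of_le (P.sdiam_nonneg E) with h | h
  · exact h
  · exfalso
    have hx : (E ∩ E).Nonempty := by rw [Set.inter_self]; exact P.cell_ne hE
    have h1 := (P.hratio n n le_rfl E hE E hE hx).1
    rw [Nat.sub_self, pow_zero, ← h, div_zero] at h1
    have : (0:ℝ) < 1 / P.C := div_pos one_pos P.hC0
    linarith

lemma ratio_le {m n : ℕ} (hmn : m ≤ n) {E E' : Set X} (hE : E ∈ P.CS.cells m)
    (hE' : E' ∈ P.CS.cells n) (h : (E ∩ E').Nonempty) :
    sdiam P.d E' ≤ P.C * P.R ^ (n - m) * sdiam P.d E := by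
  have h2 := (P.hratio m n hmn E hE E' hE' h).2
  have hp := P.cell_pos hE
  rw [div_le_iff₀ hp] at h2
  linarith

lemma ratio_ge {m n : ℕ} (hmn : m ≤ n) {E E' : Set X} (hE : E ∈ P.CS.cells m)
    (hE' : E' ∈ P.CS.cells n) (h : (E ∩ E').Nonempty) :
    P.r ^ (n - m) / P.C * sdiam P.d E ≤ sdiam P.d E' := by
  have h1 := (P.hratio m n hmn E hE E' hE' h).1
  have hp := P.cell_pos hE
  rw [le_div_iff₀ hp] at h1
  linarith

lemma cell_le {n : ℕ} {E : Set X} (hE : E ∈ P.CS.cells n) :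
    sdiam P.d E ≤ P.C * P.R ^ n * P.Dtop := by
  have := P.ratio_le (Nat.zero_le n) P.root_mem hE
    (by rw [Set.univ_inter]; exact P.cell_ne hE)
  simpa [Dtop] using this

lemma mem_cell_exists (m : ℕ) (x : X) : ∃ E ∈ P.CS.cells m, x ∈ E := by
  induction m with
  | zero => exact ⟨Set.univ, P.root_mem, trivial⟩
  | succ n ih =>
    obtain ⟨E, hE, hx⟩ := ih
    have h := P.CS.eq_sUnion_children n E hE
    rw [h] at hx
    obtain ⟨F, ⟨hF, _⟩, hxF⟩ := hx
    exact ⟨F, hF, hxF⟩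

lemma ancestor_aux (m k : ℕ) : ∀ E ∈ P.CS.cells (m + k), ∃ A ∈ P.CS.cells m, E ⊆ A := by
  induction k with
  | zero => exact fun E hE => ⟨E, hE, subset_rfl⟩
  | succ j ih =>
    intro E hE
    obtain ⟨Pa, hPa, hsub⟩ := P.CS.exists_parent (m + j) E hE
    obtain ⟨A, hA, h2⟩ := ih Pa hPa
    exact ⟨A, hA, hsub.trans h2⟩

lemma ancestor {m n : ℕ} (hmn : m ≤ n) {E : Set X} (hE : E ∈ P.CS.cells n) :
    ∃ A ∈ P.CS.cells m, E ⊆ A := by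
  apply P.ancestor_aux m (n - m)
  rwa [Nat.add_sub_cancel' hmn]

lemma descendant {n : ℕ} {E : Set X} (hE : E ∈ P.CS.cells n) {x : X} (hx : x ∈ E) (k : ℕ) :
    ∃ F ∈ P.CS.cells (n + k), x ∈ F ∧ F ⊆ E := by
  induction k with
  | zero => exact ⟨E, hE, hx, subset_rfl⟩
  | succ j ih =>
    obtain ⟨F, hF, hxF, hFE⟩ := ih
    have h := P.CS.eq_sUnion_children (n + j) F hF
    rw [h] at hxF
    obtain ⟨G, ⟨hG, hGF⟩, hxG⟩ := hxF
    exact ⟨G, hG, hxG, hGF.trans hFE⟩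

/-! ### The point-to-cell distance, cut-off functions, and the new metric -/

/-- distance from a point to a set -/
noncomputable def pd (x : X) (E : Set X) : ℝ := sdist P.d {x} E

lemma pd_nonneg (x : X) (E : Set X) : 0 ≤ P.pd x E := P.sdist_nonneg _ _

lemma pd_le {x e : X} {E : Set X} (he : e ∈ E) : P.pd x E ≤ P.d x e :=
  csInf_le (P.bddBelow2 _ _) (Set.mem_image2_of_mem rfl he)

lemma pd_eq_zero {x : X} {E : Set X} (hx : x ∈ E) : P.pd x E = 0 :=
  le_antisymm (by simpa [P.dself] using P.pd_le (x := x) hx) (P.pd_nonneg x E)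

lemma image2_singleton_ne {x : X} {E : Set X} (hE : E.Nonempty) :
    (Set.image2 P.d {x} E).Nonempty := by
  obtain ⟨e, he⟩ := hE
  exact ⟨P.d x e, Set.mem_image2_of_mem rfl he⟩

lemma pd_le_add {x y : X} {E : Set X} (hE : E.Nonempty) :
    P.pd x E ≤ P.d x y + P.pd y E := by
  rw [← sub_le_iff_le_add']
  apply le_csInf (P.image2_singleton_ne hE)
  rintro v ⟨y', hy', e, he, rfl⟩
  rcases hy'
  have h1 : P.pd x E ≤ P.d x e := P.pd_le he
  have h2 : P.d x e ≤ P.d x y + P.d y e := P.dtri x y e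
  linarith

lemma pd_lip {x y : X} {E : Set X} (hE : E.Nonempty) :
    |P.pd x E - P.pd y E| ≤ P.d x y := by
  rw [abs_sub_le_iff]
  constructor
  · have := P.pd_le_add (x := x) (y := y) hE; linarith
  · have := P.pd_le_add (x := y) (y := x) hE
    rw [P.dsymm y x] at this; linarith

lemma pd_ge {x y : X} {E : Set X} (hx : x ∈ E) (hE : E.Nonempty) :
    P.d x y - sdiam P.d E ≤ P.pd y E := by
  apply le_csInf (P.image2_singleton_ne hE)
  rintro v ⟨y', hy', e, he, rfl⟩
  rcases hy'
  have h1 : P.d x y ≤ P.d x e + P.d e y := P.dtri x e y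
  have h2 : P.d x e ≤ sdiam P.d E := P.dist_le_sdiam hx he
  have h3 : P.d e y = P.d y e := P.dsymm e y
  linarith

lemma sdist_le_pd {y : X} {G E : Set X} (hy : y ∈ G) (hE : E.Nonempty) :
    sdist P.d G E ≤ P.pd y E := by
  apply csInf_le_csInf (P.bddBelow2 G E) (P.image2_singleton_ne hE)
  rintro v ⟨y', hy', e, he, rfl⟩
  rcases hy'
  exact Set.mem_image2_of_mem hy he

/-- cutoff scale of a cell -/
noncomputable def eps (E : Set X) : ℝ := P.dlt * sdiam P.d E / 2

lemma eps_pos {n : ℕ} {E : Set X} (hE : E ∈ P.CS.cells n) : 0 < P.eps E := by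
  have h1 := P.cell_pos hE
  have h2 := P.hdlt
  unfold eps
  nlinarith

/-- the cutoff function of a cell -/
noncomputable def phi (E : Set X) (x : X) : ℝ := max 0 (1 - P.pd x E / P.eps E)

lemma phi_nonneg (E : Set X) (x : X) : 0 ≤ P.phi E x := le_max_left _ _

lemma phi_le_one {n : ℕ} {E : Set X} (hE : E ∈ P.CS.cells n) (x : X) : P.phi E x ≤ 1 := by
  apply max_le (by norm_num)
  have h1 : 0 ≤ P.pd x E / P.eps E := div_nonneg (P.pd_nonneg x E) (P.eps_pos hE).le
  linarith

lemma phi_eq_one {E : Set X} {x : X} (hx : x ∈ E) : P.phi E x = 1 := by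
  unfold phi
  rw [P.pd_eq_zero hx, zero_div, sub_zero]
  exact max_eq_right (by norm_num)

lemma phi_eq_zero {n : ℕ} {E : Set X} (hE : E ∈ P.CS.cells n) {x : X}
    (h : P.eps E ≤ P.pd x E) : P.phi E x = 0 := by
  unfold phi
  apply max_eq_left
  have hp := P.eps_pos hE
  have : 1 ≤ P.pd x E / P.eps E := (one_le_div hp).mpr h
  linarith

lemma phi_pos_pd {n : ℕ} {E : Set X} (hE : E ∈ P.CS.cells n) {x : X}
    (h : 0 < P.phi E x) : P.pd x E < P.eps E := by
  by_contra hc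
  rw [P.phi_eq_zero hE (not_lt.mp hc)] at h
  exact lt_irrefl 0 h

lemma phi_abs_le_one {n : ℕ} {E : Set X} (hE : E ∈ P.CS.cells n) (x y : X) :
    |P.phi E x - P.phi E y| ≤ 1 := by
  rw [abs_sub_le_iff]
  constructor <;>
    [have h1 := P.phi_le_one hE x; have h1 := P.phi_le_one hE y] <;>
    [have h2 := P.phi_nonneg E y; have h2 := P.phi_nonneg E x] <;> linarith

lemma phi_lip {n : ℕ} {E : Set X} (hE : E ∈ P.CS.cells n) (x y : X) :
    |P.phi E x - P.phi E y| ≤ P.d x y / P.eps E := by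
  have hep := P.eps_pos hE
  have hEne := P.cell_ne hE
  have h1 : |P.phi E x - P.phi E y| ≤ |(1 - P.pd x E / P.eps E) - (1 - P.pd y E / P.eps E)| := by
    unfold phi
    rw [max_comm 0 (1 - P.pd x E / P.eps E), max_comm 0 (1 - P.pd y E / P.eps E)]
    exact abs_max_sub_max_le_abs _ _ _
  have h2 : (1 - P.pd x E / P.eps E) - (1 - P.pd y E / P.eps E)
      = (P.pd y E - P.pd x E) / P.eps E := by ring
  rw [h2, abs_div, abs_of_pos hep] at h1
  have h3 : |P.pd y E - P.pd x E| ≤ P.d x y := by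
    rw [abs_sub_comm]; exact P.pd_lip hEne
  calc |P.phi E x - P.phi E y| ≤ |P.pd y E - P.pd x E| / P.eps E := h1
    _ ≤ P.d x y / P.eps E := by gcongr

/-- the set of coordinate differences -/
def sset (x y : X) : Set ℝ :=
  {v | ∃ m : ℕ, ∃ E, E ∈ P.CS.cells m ∧ v = P.R ^ m * |P.phi E x - P.phi E y|}

/-- **the new metric** -/
noncomputable def dd (x y : X) : ℝ := sSup (P.sset x y)

lemma sset_mem_le {x y : X} {v : ℝ} (hv : v ∈ P.sset x y) : v ≤ 1 := by
  obtain ⟨m, E, hE, rfl⟩ := hv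
  have h1 : |P.phi E x - P.phi E y| ≤ 1 := P.phi_abs_le_one hE x y
  have h2 : P.R ^ m ≤ 1 := pow_le_one₀ P.hR0.le P.hR1.le
  have h0 : (0:ℝ) ≤ P.R ^ m := pow_nonneg P.hR0.le m
  nlinarith [abs_nonneg (P.phi E x - P.phi E y)]

lemma sset_mem_nonneg {x y : X} {v : ℝ} (hv : v ∈ P.sset x y) : 0 ≤ v := by
  obtain ⟨m, E, hE, rfl⟩ := hv
  exact mul_nonneg (pow_nonneg P.hR0.le m) (abs_nonneg _)

lemma sset_bdd (x y : X) : BddAbove (P.sset x y) :=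
  ⟨1, fun _ hv => P.sset_mem_le hv⟩

lemma sset_ne (x y : X) : (P.sset x y).Nonempty :=
  ⟨P.R ^ 0 * |P.phi Set.univ x - P.phi Set.univ y|, 0, Set.univ, P.root_mem, rfl⟩

lemma dd_nonneg (x y : X) : 0 ≤ P.dd x y :=
  Real.sSup_nonneg (fun _ hv => P.sset_mem_nonneg hv)

lemma dd_le_one (x y : X) : P.dd x y ≤ 1 :=
  Real.sSup_le (fun _ hv => P.sset_mem_le hv) one_pos.le

lemma dd_comm (x y : X) : P.dd x y = P.dd y x := by
  unfold dd
  congr 1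
  ext v
  constructor <;> rintro ⟨m, E, hE, rfl⟩ <;>
    exact ⟨m, E, hE, by rw [abs_sub_comm]⟩

lemma dd_self (x : X) : P.dd x x = 0 := by
  have h : P.sset x x = {0} := by
    ext v
    constructor
    · rintro ⟨m, E, hE, rfl⟩; simp
    · rintro rfl
      exact ⟨0, Set.univ, P.root_mem, by simp⟩
  unfold dd
  rw [h, csSup_singleton]

lemma dd_triangle (x y z : X) : P.dd x z ≤ P.dd x y + P.dd y z := by
  apply Real.sSup_le
  · rintro v ⟨m, E, hE, rfl⟩
    have h1 : P.R ^ m * |P.phi E x - P.phi E y| ≤ P.dd x y :=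
      le_csSup (P.sset_bdd x y) ⟨m, E, hE, rfl⟩
    have h2 : P.R ^ m * |P.phi E y - P.phi E z| ≤ P.dd y z :=
      le_csSup (P.sset_bdd y z) ⟨m, E, hE, rfl⟩
    have h3 : |P.phi E x - P.phi E z| ≤ |P.phi E x - P.phi E y| + |P.phi E y - P.phi E z| :=
      abs_sub_le _ _ _
    have h0 : (0:ℝ) ≤ P.R ^ m := pow_nonneg P.hR0.le m
    nlinarith
  · exact add_nonneg (P.dd_nonneg x y) (P.dd_nonneg y z)

lemma dd_ge {m : ℕ} {E : Set X} (hE : E ∈ P.CS.cells m) {x y : X} (hx : x ∈ E)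
    (h : P.eps E ≤ P.pd y E) : P.R ^ m ≤ P.dd x y := by
  have h1 : P.phi E x = 1 := P.phi_eq_one hx
  have h2 : P.phi E y = 0 := P.phi_eq_zero hE h
  have h3 : P.R ^ m * |P.phi E x - P.phi E y| = P.R ^ m := by rw [h1, h2]; simp
  calc P.R ^ m = P.R ^ m * |P.phi E x - P.phi E y| := h3.symm
    _ ≤ P.dd x y := le_csSup (P.sset_bdd x y) ⟨m, E, hE, rfl⟩

lemma dd_pos {x y : X} (hxy : x ≠ y) : 0 < P.dd x y := by
  have hd : 0 < P.d x y := P.dpos hxy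
  have hden : (0:ℝ) < P.C * P.Dtop * (1 + P.dlt / 2) := by
    have h1 := P.hC0; have h2 := P.Dtop_pos; have h3 := P.hdlt
    have h4 : (0:ℝ) < 1 + P.dlt / 2 := by linarith
    exact mul_pos (mul_pos h1 h2) h4
  obtain ⟨m, hm⟩ := exists_pow_lt_of_lt_one (div_pos hd hden) P.hR1
  obtain ⟨E, hE, hxE⟩ := P.mem_cell_exists m x
  have h1 : sdiam P.d E ≤ P.C * P.R ^ m * P.Dtop := P.cell_le hE
  have hm2 : P.C * P.R ^ m * P.Dtop * (1 + P.dlt / 2) < P.d x y := by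
    rw [lt_div_iff₀ hden] at hm
    have h0 : (0:ℝ) ≤ P.R ^ m := pow_nonneg P.hR0.le m
    nlinarith
  have h2 : P.eps E ≤ P.pd y E := by
    have h3 := P.pd_ge hxE (P.cell_ne hE) (y := y)
    have h4 : 0 ≤ sdiam P.d E := P.sdiam_nonneg E
    have h5 : sdiam P.d E * (1 + P.dlt / 2) < P.d x y := by
      have : sdiam P.d E * (1 + P.dlt / 2) ≤ P.C * P.R ^ m * P.Dtop * (1 + P.dlt / 2) := by
        have : (0:ℝ) < 1 + P.dlt / 2 := by have := P.hdlt; linarith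
        nlinarith
      linarith
    unfold eps
    have := P.hdlt
    nlinarith
  exact lt_of_lt_of_le (pow_pos P.hR0 m) (P.dd_ge hE hxE h2)

lemma dd_bdd2 (S T : Set X) : BddAbove (Set.image2 P.dd S T) :=
  ⟨1, by rintro v ⟨a, _, b, _, rfl⟩; exact P.dd_le_one a b⟩

/-! ### Upper bound for `dd` on pairs of intersecting cells -/

/-- the constant in the key upper bound -/
noncomputable def KU : ℝ := max 1 (2 * P.C ^ 2 * (1 + P.C) / P.dlt)

lemma KU_one : 1 ≤ P.KU := le_max_left _ _

lemma KU_pos : 0 < P.KU := lt_of_lt_of_le one_pos P.KU_one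

lemma d_upper {n : ℕ} {F₁ F₂ : Set X} (hF₁ : F₁ ∈ P.CS.cells n) (hF₂ : F₂ ∈ P.CS.cells n)
    (hint : (F₁ ∩ F₂).Nonempty) {x y : X} (hx : x ∈ F₁) (hy : y ∈ F₂) :
    P.d x y ≤ (1 + P.C) * sdiam P.d F₁ := by
  obtain ⟨w, hw1, hw2⟩ := hint
  have h1 : P.d x w ≤ sdiam P.d F₁ := P.dist_le_sdiam hx hw1
  have h2 : P.d w y ≤ sdiam P.d F₂ := P.dist_le_sdiam hw2 hy
  have h3 : sdiam P.d F₂ ≤ P.C * sdiam P.d F₁ := by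
    have := P.ratio_le le_rfl hF₁ hF₂ ⟨w, hw1, hw2⟩
    rw [Nat.sub_self, pow_zero] at this
    linarith
  have h4 := P.dtri x w y
  linarith

lemma core {m n : ℕ} (hmn : m ≤ n) {F₁ : Set X} (hF₁ : F₁ ∈ P.CS.cells n) {x y : X}
    (hx : x ∈ F₁) (hdxy : P.d x y ≤ (1 + P.C) * sdiam P.d F₁) {E : Set X}
    (hE : E ∈ P.CS.cells m) (hpd : P.pd x E < P.eps E) :
    P.R ^ m * |P.phi E x - P.phi E y| ≤ P.KU * P.R ^ n := by
  obtain ⟨A, hA, hsub⟩ := P.ancestor hmn hF₁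
  have hxA : x ∈ A := hsub hx
  have hEpos := P.cell_pos hE
  have hApos := P.cell_pos hA
  have hF₁pos := P.cell_pos hF₁
  have hEA : (E ∩ A).Nonempty := by
    by_contra h
    have hdisj : Disjoint E A := by
      rw [Set.disjoint_iff_inter_eq_empty]
      exact Set.not_nonempty_iff_eq_empty.mp h
    have h1 : P.dlt * sdiam P.d E ≤ sdist P.d E A := P.hsep m E hE A hA hdisj
    have h2 : sdist P.d E A ≤ P.pd x E := by
      rw [P.sdist_comm]
      exact P.sdist_le_pd hxA (P.cell_ne hE)
    have h3 : P.eps E < P.dlt * sdiam P.d E := by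
      unfold eps
      have := P.hdlt
      nlinarith
    linarith
  have h1 : sdiam P.d A ≤ P.C * sdiam P.d E := by
    have := P.ratio_le le_rfl hE hA hEA
    rw [Nat.sub_self, pow_zero] at this
    linarith
  have h2 : sdiam P.d F₁ ≤ P.C * P.R ^ (n - m) * sdiam P.d A :=
    P.ratio_le hmn hA hF₁ ⟨x, hxA, hx⟩
  have h3 : |P.phi E x - P.phi E y| ≤ P.d x y / P.eps E := P.phi_lip hE x y
  have hRm : (0:ℝ) < P.R ^ m := pow_pos P.hR0 m
  have hRnm : (0:ℝ) < P.R ^ (n - m) := pow_pos P.hR0 (n - m)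
  have hep := P.eps_pos hE
  have hC := P.hC0
  have hdl := P.hdlt
  -- d x y ≤ (1+C) C² R^(n-m) sdiam E
  have hd2 : P.d x y ≤ (1 + P.C) * P.C ^ 2 * P.R ^ (n - m) * sdiam P.d E := by
    have ha : sdiam P.d F₁ ≤ P.C * P.R ^ (n - m) * (P.C * sdiam P.d E) := by nlinarith
    nlinarith
  have h4 : P.d x y / P.eps E ≤ 2 * (1 + P.C) * P.C ^ 2 * P.R ^ (n - m) / P.dlt := by
    rw [div_le_div_iff₀ hep hdl]
    unfold eps
    nlinarith
  have h5 : P.R ^ m * |P.phi E x - P.phi E y|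
      ≤ P.R ^ m * (2 * (1 + P.C) * P.C ^ 2 * P.R ^ (n - m) / P.dlt) := by
    have := le_trans h3 h4
    nlinarith [abs_nonneg (P.phi E x - P.phi E y)]
  have hpow : P.R ^ m * P.R ^ (n - m) = P.R ^ n := by
    rw [← pow_add, Nat.add_sub_cancel' hmn]
  have h6 : P.R ^ m * (2 * (1 + P.C) * P.C ^ 2 * P.R ^ (n - m) / P.dlt)
      = 2 * P.C ^ 2 * (1 + P.C) / P.dlt * P.R ^ n := by
    rw [← hpow]; field_simp
  have h7 : 2 * P.C ^ 2 * (1 + P.C) / P.dlt ≤ P.KU := le_max_right _ _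
  have hRn : (0:ℝ) < P.R ^ n := pow_pos P.hR0 n
  calc P.R ^ m * |P.phi E x - P.phi E y|
      ≤ 2 * P.C ^ 2 * (1 + P.C) / P.dlt * P.R ^ n := by rw [← h6]; exact h5
    _ ≤ P.KU * P.R ^ n := by nlinarith

lemma dd_le {n : ℕ} {F₁ F₂ : Set X} (hF₁ : F₁ ∈ P.CS.cells n) (hF₂ : F₂ ∈ P.CS.cells n)
    (hint : (F₁ ∩ F₂).Nonempty) {x y : X} (hx : x ∈ F₁) (hy : y ∈ F₂) :
    P.dd x y ≤ P.KU * P.R ^ n := by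
  have hRn : (0:ℝ) < P.R ^ n := pow_pos P.hR0 n
  apply Real.sSup_le
  · rintro v ⟨m, E, hE, rfl⟩
    rcases le_or_gt n m with h | h
    · have h1 : |P.phi E x - P.phi E y| ≤ 1 := P.phi_abs_le_one hE x y
      have h2 : P.R ^ m ≤ P.R ^ n := pow_le_pow_of_le_one P.hR0.le P.hR1.le h
      have h0 : (0:ℝ) ≤ P.R ^ m := pow_nonneg P.hR0.le m
      have := P.KU_one
      nlinarith [abs_nonneg (P.phi E x - P.phi E y)]
    · have hmn : m ≤ n := h.le
      rcases lt_or_ge (P.pd x E) (P.eps E) with hc | hc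
      · exact P.core hmn hF₁ hx (P.d_upper hF₁ hF₂ hint hx hy) hE hc
      rcases lt_or_ge (P.pd y E) (P.eps E) with hc2 | hc2
      · have hint' : (F₂ ∩ F₁).Nonempty := by rwa [Set.inter_comm]
        have hd : P.d y x ≤ (1 + P.C) * sdiam P.d F₂ := P.d_upper hF₂ hF₁ hint' hy hx
        have := P.core hmn hF₂ hy hd hE hc2
        rwa [abs_sub_comm] at this
      · have hx0 : P.phi E x = 0 := P.phi_eq_zero hE hc
        have hy0 : P.phi E y = 0 := P.phi_eq_zero hE hc2
        rw [hx0, hy0, sub_zero, abs_zero, mul_zero]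
        exact mul_nonneg P.KU_pos.le hRn.le
  · exact mul_nonneg P.KU_pos.le hRn.le

/-! ### Diameter bounds for `dd` on cells -/

lemma cell_dd_le {n : ℕ} {E : Set X} (hE : E ∈ P.CS.cells n) :
    sdiam P.dd E ≤ P.KU * P.R ^ n := by
  have hRn : (0:ℝ) < P.R ^ n := pow_pos P.hR0 n
  apply Real.sSup_le
  · rintro v ⟨a, ha, b, hb, rfl⟩
    exact P.dd_le hE hE (by rw [Set.inter_self]; exact P.cell_ne hE) ha hb
  · exact mul_nonneg P.KU_pos.le hRn.le

lemma cell_dd_ge : ∃ k0 : ℕ, ∀ n : ℕ, ∀ E ∈ P.CS.cells n,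
    P.R ^ k0 * P.R ^ n ≤ sdiam P.dd E := by
  have hden0 : (0:ℝ) < 4 * P.C * (1 + P.dlt / 2) := by
    have h1 := P.hC0; have h2 := P.hdlt; nlinarith
  have hden : (0:ℝ) < 1 / (4 * P.C * (1 + P.dlt / 2)) := div_pos one_pos hden0
  obtain ⟨k0, hk0⟩ := exists_pow_lt_of_lt_one hden P.hR1
  refine ⟨k0, fun n E₀ hE₀ => ?_⟩
  obtain ⟨p, hp⟩ := P.cell_ne hE₀
  obtain ⟨F, hF, hpF, hFsub⟩ := P.descendant hE₀ hp k0
  have hD0 := P.cell_pos hE₀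
  have hFle : sdiam P.d F ≤ P.C * P.R ^ k0 * sdiam P.d E₀ := by
    have h := P.ratio_le (Nat.le_add_right n k0) hE₀ hF ⟨p, hp, hpF⟩
    rwa [Nat.add_sub_cancel_left] at h
  have hCk : P.C * P.R ^ k0 * (1 + P.dlt / 2) < 1 / 4 := by
    rw [lt_div_iff₀ hden0] at hk0
    have hC := P.hC0
    have hd := P.hdlt
    nlinarith [pow_nonneg P.hR0.le k0]
  -- key: any y ∈ E₀ far from p gives a lower bound
  have key : ∀ y ∈ E₀, sdiam P.d E₀ / 4 < P.d p y → P.R ^ k0 * P.R ^ n ≤ sdiam P.dd E₀ := by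
    intro y hy hfar
    have h1 : P.d p y - sdiam P.d F ≤ P.pd y F := P.pd_ge hpF (P.cell_ne hF)
    have h2 : P.eps F ≤ P.pd y F := by
      unfold eps
      have hd := P.hdlt
      have hF0 : 0 ≤ sdiam P.d F := P.sdiam_nonneg F
      nlinarith
    have h3 : P.R ^ (n + k0) ≤ P.dd p y := P.dd_ge hF hpF h2
    have h4 : P.dd p y ≤ sdiam P.dd E₀ :=
      le_csSup (P.dd_bdd2 E₀ E₀) (Set.mem_image2_of_mem hp hy)
    calc P.R ^ k0 * P.R ^ n = P.R ^ (n + k0) := by rw [← pow_add, Nat.add_comm]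
      _ ≤ sdiam P.dd E₀ := le_trans h3 h4
  -- find a far point
  have hlt : sdiam P.d E₀ / 2 < sSup (Set.image2 P.d E₀ E₀) := by
    have : sdiam P.d E₀ / 2 < sdiam P.d E₀ := by linarith
    exact this
  obtain ⟨w, hw, hwgt⟩ := exists_lt_of_lt_csSup
    (⟨P.d p p, Set.mem_image2_of_mem hp hp⟩) hlt
  obtain ⟨u, hu, v, hv, rfl⟩ := hw
  have htri : P.d u v ≤ P.d u p + P.d p v := P.dtri u p v
  rcases le_total (P.d u p) (P.d p v) with hcase | hcase
  · apply key v hv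
    linarith
  · apply key u hu
    have : P.d p u = P.d u p := P.dsymm p u
    linarith

/-! ### Separation for `dd` -/

lemma dd_sep {n : ℕ} {E₁ E₂ : Set X} (h1 : E₁ ∈ P.CS.cells n) (h2 : E₂ ∈ P.CS.cells n)
    (hd : Disjoint E₁ E₂) {x y : X} (hx : x ∈ E₁) (hy : y ∈ E₂) :
    P.R ^ n ≤ P.dd x y := by
  apply P.dd_ge h1 hx
  have hs : P.dlt * sdiam P.d E₁ ≤ sdist P.d E₁ E₂ := P.hsep n E₁ h1 E₂ h2 hd
  have hs2 : sdist P.d E₂ E₁ ≤ P.pd y E₁ := P.sdist_le_pd hy (P.cell_ne h1)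
  rw [P.sdist_comm E₂ E₁] at hs2
  have hpos := P.cell_pos h1
  have := P.hdlt
  unfold eps
  nlinarith

/-! ### Combinatorial level of a pair of points -/

lemma level_exists {x y : X} (hxy : x ≠ y) :
    ∃ N : ℕ,
      (∃ F₁, F₁ ∈ P.CS.cells N ∧ ∃ F₂, F₂ ∈ P.CS.cells N ∧
        x ∈ F₁ ∧ y ∈ F₂ ∧ (F₁ ∩ F₂).Nonempty) ∧
      (∀ E ∈ P.CS.cells (N + 1), ∀ F ∈ P.CS.cells (N + 1), x ∈ E → y ∈ F → Disjoint E F) := by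
  classical
  set Q : ℕ → Prop := fun k => ∃ F₁, F₁ ∈ P.CS.cells k ∧ ∃ F₂, F₂ ∈ P.CS.cells k ∧
    x ∈ F₁ ∧ y ∈ F₂ ∧ (F₁ ∩ F₂).Nonempty with hQdef
  have hQ0 : Q 0 := ⟨Set.univ, P.root_mem, Set.univ, P.root_mem, trivial, trivial,
    ⟨x, trivial, trivial⟩⟩
  have hd : 0 < P.d x y := P.dpos hxy
  have hden0 : (0:ℝ) < 2 * P.C * P.Dtop := by
    have h1 := P.hC0; have h2 := P.Dtop_pos; nlinarith
  have hden : (0:ℝ) < P.d x y / (2 * P.C * P.Dtop) := div_pos hd hden0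
  obtain ⟨n₀, hn₀⟩ := exists_pow_lt_of_lt_one hden P.hR1
  have hQn₀ : ¬ Q n₀ := by
    rintro ⟨F₁, h1, F₂, h2, hx1, hy2, w, hw1, hw2⟩
    have ha : P.d x w ≤ sdiam P.d F₁ := P.dist_le_sdiam hx1 hw1
    have hb : P.d w y ≤ sdiam P.d F₂ := P.dist_le_sdiam hw2 hy2
    have hc1 : sdiam P.d F₁ ≤ P.C * P.R ^ n₀ * P.Dtop := P.cell_le h1
    have hc2 : sdiam P.d F₂ ≤ P.C * P.R ^ n₀ * P.Dtop := P.cell_le h2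
    have htri := P.dtri x w y
    rw [lt_div_iff₀ hden0] at hn₀
    nlinarith
  set N := Nat.findGreatest Q n₀ with hNdef
  have hQN : Q N := Nat.findGreatest_spec (Nat.zero_le n₀) hQ0
  have hNle : N ≤ n₀ := Nat.findGreatest_le n₀
  have hNlt : N < n₀ := lt_of_le_of_ne hNle (fun h => hQn₀ (h ▸ hQN))
  have hnot : ¬ Q (N + 1) := Nat.findGreatest_is_greatest (Nat.lt_succ_self N) hNlt
  refine ⟨N, hQN, fun E hE F hF hxE hyF => ?_⟩
  rw [Set.disjoint_iff_inter_eq_empty]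
  by_contra h
  exact hnot ⟨E, hE, F, hF, hxE, hyF, Set.nonempty_iff_ne_empty.mpr h⟩

lemma dd_lower_of_sep {ν : ℕ} {x y : X}
    (hdis : ∀ E ∈ P.CS.cells ν, ∀ F ∈ P.CS.cells ν, x ∈ E → y ∈ F → Disjoint E F) :
    P.R ^ ν ≤ P.dd x y := by
  obtain ⟨E, hE, hxE⟩ := P.mem_cell_exists ν x
  obtain ⟨F, hF, hyF⟩ := P.mem_cell_exists ν y
  exact P.dd_sep hE hF (hdis E hE F hF hxE hyF) hxE hyF

lemma d_lower {N : ℕ} {F₁ : Set X} (hF₁ : F₁ ∈ P.CS.cells N) {x y : X} (hx : x ∈ F₁)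
    (hdis : ∀ E ∈ P.CS.cells (N + 1), ∀ F ∈ P.CS.cells (N + 1), x ∈ E → y ∈ F → Disjoint E F) :
    P.dlt * P.r / P.C * sdiam P.d F₁ ≤ P.d x y := by
  obtain ⟨E, hE, hxE⟩ := P.mem_cell_exists (N + 1) x
  obtain ⟨F, hF, hyF⟩ := P.mem_cell_exists (N + 1) y
  have hdisj := hdis E hE F hF hxE hyF
  have h1 : P.dlt * sdiam P.d E ≤ sdist P.d E F := P.hsep (N + 1) E hE F hF hdisj
  have h2 : sdist P.d E F ≤ P.d x y := P.sdist_le hxE hyF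
  have h3 : P.r ^ 1 / P.C * sdiam P.d F₁ ≤ sdiam P.d E := by
    have h := P.ratio_ge (Nat.le_succ N) hF₁ hE ⟨x, hx, hxE⟩
    rwa [show N + 1 - N = 1 from by omega] at h
  rw [pow_one] at h3
  have hp := P.cell_pos hF₁
  have h4 : P.dlt * (P.r / P.C * sdiam P.d F₁) ≤ P.dlt * sdiam P.d E :=
    mul_le_mul_of_nonneg_left h3 P.hdlt.le
  have h5 : P.dlt * P.r / P.C * sdiam P.d F₁ = P.dlt * (P.r / P.C * sdiam P.d F₁) := by ring
  linarith

lemma decay_dd : ∃ C₂ : ℝ, 1 ≤ C₂ ∧ ∀ n : ℕ, ∀ E ∈ P.CS.cells n,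
    P.R ^ n / C₂ ≤ sdiam P.dd E ∧ sdiam P.dd E ≤ C₂ * P.R ^ n := by
  obtain ⟨k0, hk0⟩ := P.cell_dd_ge
  have hR0 : (0:ℝ) < P.R := P.hR0
  have hR1 : P.R < 1 := P.hR1
  refine ⟨max (max P.KU ((1 / P.R) ^ k0)) 1, le_max_right _ _, ?_⟩
  set C₂ : ℝ := max (max P.KU ((1 / P.R) ^ k0)) 1 with hC₂def
  have hC₂1 : (1:ℝ) ≤ C₂ := le_max_right _ _
  have hC₂KU : P.KU ≤ C₂ := le_trans (le_max_left _ _) (le_max_left _ _)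
  have hC₂k0 : (1 / P.R) ^ k0 ≤ C₂ := le_trans (le_max_right _ _) (le_max_left _ _)
  have hC₂pos : (0:ℝ) < C₂ := lt_of_lt_of_le one_pos hC₂1
  intro n E hE
  have hup : sdiam P.dd E ≤ P.KU * P.R ^ n := P.cell_dd_le hE
  have hlow : P.R ^ k0 * P.R ^ n ≤ sdiam P.dd E := hk0 n E hE
  have hRn : (0:ℝ) < P.R ^ n := pow_pos hR0 n
  have hRk : (0:ℝ) < P.R ^ k0 := pow_pos hR0 k0
  constructor
  · have h2 : (1:ℝ) ≤ P.R ^ k0 * C₂ := by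
      have h3 : (1 / P.R) ^ k0 ≤ C₂ := hC₂k0
      rw [div_pow, one_pow, div_le_iff₀ hRk] at h3
      nlinarith
    have h1 : P.R ^ n / C₂ ≤ P.R ^ k0 * P.R ^ n := by
      rw [div_le_iff₀ hC₂pos]
      nlinarith
    linarith
  · nlinarith [P.KU_pos]

lemma metric_dd : IsMetricOn P.dd := by
  refine ⟨P.dd_nonneg, fun x y => ⟨?_, fun h => h ▸ P.dd_self x⟩, P.dd_comm, P.dd_triangle⟩
  intro h0
  by_contra hne'
  exact (P.dd_pos hne').ne' h0

lemma undist_dd : IsUndistorted P.CS.cells P.dd := by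
  obtain ⟨C₂, hC₂1, hdecay⟩ := P.decay_dd
  have hR0 : (0:ℝ) < P.R := P.hR0
  have hR1 : P.R < 1 := P.hR1
  have hC₂pos : (0:ℝ) < C₂ := lt_of_lt_of_le one_pos hC₂1
  have hddpos : ∀ n : ℕ, ∀ E ∈ P.CS.cells n, 0 < sdiam P.dd E := by
    intro n E hE
    have hRn : (0:ℝ) < P.R ^ n := pow_pos hR0 n
    have h2 : (0:ℝ) < P.R ^ n / C₂ := div_pos hRn hC₂pos
    linarith [(hdecay n E hE).1]
  refine ⟨P.R, P.R, C₂ ^ 2, 1 / C₂, hR0, le_rfl, hR1, by nlinarith,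
    div_pos one_pos hC₂pos, ?_, ?_⟩
  · intro m n hmn E hE E' hE' _hint
    have ha := hdecay m E hE
    have hb := hdecay n E' hE'
    have hapos : 0 < sdiam P.dd E := hddpos m E hE
    have hRm : (0:ℝ) < P.R ^ m := pow_pos hR0 m
    have hRn : (0:ℝ) < P.R ^ n := pow_pos hR0 n
    have hpow : P.R ^ (n - m) * P.R ^ m = P.R ^ n := pow_sub_mul_pow _ hmn
    have hRnm : (0:ℝ) < P.R ^ (n - m) := pow_pos hR0 (n - m)
    constructor
    · have hb0 : (0:ℝ) ≤ sdiam P.dd E' := le_trans (div_pos hRn hC₂pos).le hb.1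
      have h1 : (P.R ^ n / C₂) / (C₂ * P.R ^ m) ≤ sdiam P.dd E' / sdiam P.dd E :=
        div_le_div₀ hb0 hb.1 hapos ha.2
      have h2 : P.R ^ (n - m) / C₂ ^ 2 = (P.R ^ n / C₂) / (C₂ * P.R ^ m) := by
        rw [← hpow]; field_simp
      rw [h2]; exact h1
    · have h1 : sdiam P.dd E' / sdiam P.dd E ≤ (C₂ * P.R ^ n) / (P.R ^ m / C₂) := by
        apply div_le_div₀ (mul_nonneg hC₂pos.le hRn.le) hb.2 (div_pos hRm hC₂pos) ha.1
      have h2 : (C₂ * P.R ^ n) / (P.R ^ m / C₂) = C₂ ^ 2 * P.R ^ (n - m) := by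
        rw [← hpow]; field_simp
      rw [← h2]; exact h1
  · intro n E₁ h1 E₂ h2 hdisj
    have hs : P.R ^ n ≤ sdist P.dd E₁ E₂ := by
      apply le_csInf
      · obtain ⟨x, hx⟩ := P.cell_ne h1
        obtain ⟨y, hy⟩ := P.cell_ne h2
        exact ⟨P.dd x y, Set.mem_image2_of_mem hx hy⟩
      · rintro v ⟨x, hx, y, hy, rfl⟩
        exact P.dd_sep h1 h2 hdisj hx hy
    have hup : sdiam P.dd E₁ ≤ C₂ * P.R ^ n := (hdecay n E₁ h1).2
    have hRn : (0:ℝ) < P.R ^ n := pow_pos hR0 n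
    have h3 : 1 / C₂ * sdiam P.dd E₁ ≤ P.R ^ n := by
      rw [div_mul_eq_mul_div, div_le_iff₀ hC₂pos]
      nlinarith
    linarith

lemma strong_dd : ∃ rr CC : ℝ, 0 < rr ∧ rr < 1 ∧ 1 ≤ CC ∧ ∀ n : ℕ, ∀ E ∈ P.CS.cells n,
    rr ^ n / CC ≤ sdiam P.dd E ∧ sdiam P.dd E ≤ CC * rr ^ n := by
  obtain ⟨C₂, hC₂1, hdecay⟩ := P.decay_dd
  exact ⟨P.R, C₂, P.hR0, P.hR1, hC₂1, hdecay⟩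

lemma qs_dd : ∃ η : ℝ → ℝ, IsQSGauge η ∧ QSIneq P.d P.dd (fun x : X => x) η := by
  have hR0 : (0:ℝ) < P.R := P.hR0
  have hR1 : P.R < 1 := P.hR1
  have hr1 : P.r < 1 := lt_of_le_of_lt P.hrR hR1
  have hlogr : Real.log P.r < 0 := Real.log_neg P.hr hr1
  have hlogR : Real.log P.R < 0 := Real.log_neg hR0 hR1
  set β : ℝ := Real.log P.R / Real.log P.r with hβdef
  have hβ : 0 < β := div_pos_of_neg_of_neg hlogR hlogr
  have hrβ : P.r ^ β = P.R := by
    rw [Real.rpow_def_of_pos P.hr, hβdef, mul_div_cancel₀ _ (ne_of_lt hlogr)]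
    exact Real.exp_log hR0
  have hpowβ : ∀ k : ℕ, ((P.r ^ k : ℝ)) ^ β = P.R ^ k := by
    intro k
    rw [← Real.rpow_natCast P.r k, ← Real.rpow_mul P.hr.le, mul_comm,
      Real.rpow_mul P.hr.le, hrβ, Real.rpow_natCast]
  set c₃ : ℝ := P.dlt * P.r / (P.C ^ 2 * (1 + P.C)) with hc₃def
  have hc₃pos : 0 < c₃ := by
    rw [hc₃def]
    exact div_pos (mul_pos P.hdlt P.hr)
      (mul_pos (pow_pos P.hC0 2) (by nlinarith [P.hC0]))
  have hc₃β : 0 < c₃ ^ β := Real.rpow_pos_of_pos hc₃pos β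
  have hKR : 0 < P.KU / P.R := div_pos P.KU_pos hR0
  set Kq : ℝ := P.KU / P.R * max (1 / c₃ ^ β) (1 / c₃) with hKqdef
  have hKq1 : P.KU / P.R * (1 / c₃ ^ β) ≤ Kq := by
    rw [hKqdef]
    have := le_max_left (1 / c₃ ^ β) (1 / c₃)
    nlinarith
  have hKq2 : P.KU / P.R * (1 / c₃) ≤ Kq := by
    rw [hKqdef]
    have := le_max_right (1 / c₃ ^ β) (1 / c₃)
    nlinarith
  have hKqpos : 0 < Kq := by
    have h1 : 0 < P.KU / P.R * (1 / c₃) := mul_pos hKR (div_pos one_pos hc₃pos)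
    linarith
  refine ⟨fun u => Kq * (u ^ β + u), ⟨?_, ?_, ?_, ?_, ?_⟩, ?_⟩
  · -- continuity
    intro u hu
    apply ContinuousAt.continuousWithinAt
    exact continuousAt_const.mul
      ((Real.continuousAt_rpow_const u β (Or.inr hβ.le)).add continuousAt_id)
  · -- strict monotonicity
    intro u hu v hv huv
    have h1 : u ^ β < v ^ β := Real.rpow_lt_rpow hu huv hβ
    have : u ^ β + u < v ^ β + v := by linarith
    exact mul_lt_mul_of_pos_left this hKqpos
  · -- η 0 = 0
    simp [Real.zero_rpow hβ.ne']
  · -- maps to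
    intro u hu
    simp only [Set.mem_Ici] at hu ⊢
    have h1 : 0 ≤ u ^ β := Real.rpow_nonneg hu β
    nlinarith
  · -- surjectivity
    intro v hv
    simp only [Set.mem_Ici] at hv
    rcases eq_or_lt_of_le hv with h0 | h0
    · exact ⟨0, Set.self_mem_Ici, by simp [← h0, Real.zero_rpow hβ.ne']⟩
    · set B : ℝ := v / Kq with hBdef
      have hBpos : 0 < B := by rw [hBdef]; exact div_pos h0 hKqpos
      have hcont : ContinuousOn (fun u : ℝ => Kq * (u ^ β + u)) (Set.Icc 0 B) := by
        intro u _
        apply ContinuousAt.continuousWithinAt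
        exact continuousAt_const.mul
          ((Real.continuousAt_rpow_const u β (Or.inr hβ.le)).add continuousAt_id)
      have hmem : v ∈ Set.Icc (Kq * ((0:ℝ) ^ β + 0)) (Kq * (B ^ β + B)) := by
        constructor
        · rw [Real.zero_rpow hβ.ne']
          simpa using hv
        · have h1 : 0 ≤ B ^ β := Real.rpow_nonneg hBpos.le β
          have h2 : Kq * B = v := by
            rw [hBdef, mul_comm, div_mul_cancel₀ _ hKqpos.ne']
          nlinarith
      obtain ⟨u, hu, hηu⟩ := intermediate_value_Icc hBpos.le hcont hmem
      exact ⟨u, hu.1, hηu⟩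
  · -- the QS inequality
    intro a b c hab hac _hbc
    show P.dd a b / P.dd a c ≤ Kq * ((P.d a b / P.d a c) ^ β + P.d a b / P.d a c)
    obtain ⟨N₁, ⟨F₁, hF₁, F₂, hF₂, haF₁, hbF₂, hint₁⟩, hdis₁⟩ := P.level_exists hab
    obtain ⟨N₂, ⟨G₁, hG₁, G₂, hG₂, haG₁, hcG₂, hint₂⟩, hdis₂⟩ := P.level_exists hac
    have A1 : P.dd a b ≤ P.KU * P.R ^ N₁ := P.dd_le hF₁ hF₂ hint₁ haF₁ hbF₂
    have A2 : P.R ^ (N₂ + 1) ≤ P.dd a c := P.dd_lower_of_sep hdis₂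
    have B1 : P.dlt * P.r / P.C * sdiam P.d F₁ ≤ P.d a b := P.d_lower hF₁ haF₁ hdis₁
    have B2 : P.d a c ≤ (1 + P.C) * sdiam P.d G₁ := P.d_upper hG₁ hG₂ hint₂ haG₁ hcG₂
    have hdacpos : 0 < P.d a c := P.dpos hac
    have hG₁pos := P.cell_pos hG₁
    have hF₁pos := P.cell_pos hF₁
    have hCpos := P.hC0
    have hdlt := P.hdlt
    have hrpos := P.hr
    set t : ℝ := P.d a b / P.d a c with htdef
    have ht0 : 0 ≤ t := div_nonneg (P.dnn a b) (P.dnn a c)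
    have htβ0 : 0 ≤ t ^ β := Real.rpow_nonneg ht0 β
    have hratio'' : P.dd a b / P.dd a c ≤ (P.KU * P.R ^ N₁) / P.R ^ (N₂ + 1) :=
      div_le_div₀ (mul_nonneg P.KU_pos.le (pow_pos hR0 N₁).le) A1 (pow_pos hR0 _) A2
    rcases le_or_gt N₂ N₁ with hcase | hcase
    · -- N₂ ≤ N₁
      have hΔpos : (0:ℝ) < P.r ^ (N₁ - N₂) := pow_pos P.hr (N₁ - N₂)
      have hQ : P.r ^ (N₁ - N₂) / P.C * sdiam P.d G₁ ≤ sdiam P.d F₁ :=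
        P.ratio_ge hcase hG₁ hF₁ ⟨a, haG₁, haF₁⟩
      have hnum : P.dlt * P.r / P.C * (P.r ^ (N₁ - N₂) / P.C * sdiam P.d G₁) ≤ P.d a b := by
        have h0 : (0:ℝ) ≤ P.dlt * P.r / P.C :=
          (div_pos (mul_pos hdlt hrpos) hCpos).le
        nlinarith
      have ht1 : c₃ * P.r ^ (N₁ - N₂) ≤ t := by
        have h2 : P.dlt * P.r / P.C * (P.r ^ (N₁ - N₂) / P.C * sdiam P.d G₁)
            / ((1 + P.C) * sdiam P.d G₁) ≤ P.d a b / P.d a c :=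
          div_le_div₀ (P.dnn a b) hnum hdacpos B2
        have h3 : P.dlt * P.r / P.C * (P.r ^ (N₁ - N₂) / P.C * sdiam P.d G₁)
            / ((1 + P.C) * sdiam P.d G₁) = c₃ * P.r ^ (N₁ - N₂) := by
          rw [hc₃def]; field_simp
        rw [htdef]; rw [h3] at h2; exact h2
      have hr2 : P.r ^ (N₁ - N₂) ≤ t / c₃ := by
        rw [le_div_iff₀ hc₃pos]; nlinarith
      have hR2 : P.R ^ (N₁ - N₂) ≤ (t / c₃) ^ β := by
        rw [← hpowβ]
        exact Real.rpow_le_rpow (pow_nonneg P.hr.le _) hr2 hβ.le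
      have heq : (P.KU * P.R ^ N₁) / P.R ^ (N₂ + 1) = (P.KU / P.R) * P.R ^ (N₁ - N₂) := by
        have hpow : P.R ^ (N₁ - N₂) * P.R ^ N₂ = P.R ^ N₁ := pow_sub_mul_pow _ hcase
        rw [← hpow, pow_succ]
        have hRN₂ : (0:ℝ) < P.R ^ N₂ := pow_pos hR0 N₂
        field_simp
      have h3 : (t / c₃) ^ β = t ^ β / c₃ ^ β := Real.div_rpow ht0 hc₃pos.le β
      have hchain : P.dd a b / P.dd a c ≤ Kq * t ^ β := by
        calc P.dd a b / P.dd a c ≤ (P.KU / P.R) * P.R ^ (N₁ - N₂) := by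
              rw [← heq]; exact hratio''
          _ ≤ (P.KU / P.R) * (t ^ β / c₃ ^ β) := by
              rw [← h3]; nlinarith
          _ = (P.KU / P.R) * (1 / c₃ ^ β) * t ^ β := by ring
          _ ≤ Kq * t ^ β := by nlinarith
      nlinarith
    · -- N₁ < N₂
      have hcase' : N₁ ≤ N₂ := hcase.le
      have hRΔ : (0:ℝ) < P.R ^ (N₂ - N₁) := pow_pos hR0 (N₂ - N₁)
      have hQ : sdiam P.d G₁ ≤ P.C * P.R ^ (N₂ - N₁) * sdiam P.d F₁ :=
        P.ratio_le hcase' hF₁ hG₁ ⟨a, haF₁, haG₁⟩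
      have hden2 : P.d a c ≤ (1 + P.C) * (P.C * P.R ^ (N₂ - N₁) * sdiam P.d F₁) := by
        nlinarith
      have ht1 : c₃ / P.R ^ (N₂ - N₁) ≤ t := by
        have h2 : (P.dlt * P.r / P.C * sdiam P.d F₁)
            / ((1 + P.C) * (P.C * P.R ^ (N₂ - N₁) * sdiam P.d F₁)) ≤ P.d a b / P.d a c :=
          div_le_div₀ (P.dnn a b) B1 hdacpos hden2
        have h3 : (P.dlt * P.r / P.C * sdiam P.d F₁)
            / ((1 + P.C) * (P.C * P.R ^ (N₂ - N₁) * sdiam P.d F₁))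
            = c₃ / P.R ^ (N₂ - N₁) := by
          rw [hc₃def]; field_simp
        rw [htdef]; rw [h3] at h2; exact h2
      have hr2 : 1 / P.R ^ (N₂ - N₁) ≤ t / c₃ := by
        rw [div_le_div_iff₀ hRΔ hc₃pos]
        rw [div_le_iff₀ hRΔ] at ht1
        nlinarith
      have heq : (P.KU * P.R ^ N₁) / P.R ^ (N₂ + 1)
          = (P.KU / P.R) * (1 / P.R ^ (N₂ - N₁)) := by
        have hpow : P.R ^ (N₂ - N₁) * P.R ^ N₁ = P.R ^ N₂ := pow_sub_mul_pow _ hcase'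
        rw [pow_succ, ← hpow]
        have hRN₁ : (0:ℝ) < P.R ^ N₁ := pow_pos hR0 N₁
        field_simp
      have hchain : P.dd a b / P.dd a c ≤ Kq * t := by
        calc P.dd a b / P.dd a c ≤ (P.KU / P.R) * (1 / P.R ^ (N₂ - N₁)) := by
              rw [← heq]; exact hratio''
          _ ≤ (P.KU / P.R) * (t / c₃) := by
              have h4 : 1 / P.R ^ (N₂ - N₁) ≤ t / c₃ := hr2
              nlinarith
          _ = (P.KU / P.R) * (1 / c₃) * t := by ring
          _ ≤ Kq * t := by nlinarith
      nlinarith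

end Pack

end Stmt9Aux


/-- Every undistorted metric on a finitely ramified fractal is
quasisymmetrically equivalent to an undistorted metric satisfying the strong
exponential decay condition `r^n/C ≤ diam(E) ≤ C r^n` for all `n`-cells `E`. -/
theorem stmt9 {X : Type*} [TopologicalSpace X] [CompactSpace X] [ConnectedSpace X]
    [TopologicalSpace.MetrizableSpace X] (CS : CellStructure X) (d : X → X → ℝ)
    (hmet : IsMetricOn d) (htop : InducesTopology d) (hund : IsUndistorted CS.cells d) :
    ∃ d'' : X → X → ℝ, IsMetricOn d'' ∧ IsUndistorted CS.cells d'' ∧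
      (∃ η : ℝ → ℝ, IsQSGauge η ∧ QSIneq d d'' (fun x : X => x) η) ∧
      ∃ r C : ℝ, 0 < r ∧ r < 1 ∧ 1 ≤ C ∧
        ∀ n : ℕ, ∀ E ∈ CS.cells n, r ^ n / C ≤ sdiam d'' E ∧ sdiam d'' E ≤ C * r ^ n := by
  obtain ⟨r0, R0, C0, δ0, hr0, hrR0, hR10, hC00, hδ0, hratio0, hsep0⟩ := hund
  have hne : Nonempty X := inferInstance
  let P : Stmt9Aux.Pack X :=
    { CS := CS, d := d, r := r0, R := R0, C := C0, dlt := δ0,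
      dnn := hmet.1, deq := hmet.2.1, dsymm := hmet.2.2.1, dtri := hmet.2.2.2,
      hr := hr0, hrR := hrR0, hR1 := hR10, hC := hC00, hdlt := hδ0,
      hratio := hratio0, hsep := hsep0, hne := hne }
  exact ⟨P.dd, P.metric_dd, P.undist_dd, P.qs_dd, P.strong_dd⟩
end

section
/- Let X and Y be finitely ramified fractals equipped with undistorted metrics, and let f : X → Y be a piecewise cellular homeomorphism. Then f is a quasisymmetry. -/
open Set

/-- `g` restricts to a cellular homeomorphism from the `m`-cell `E` of `X` onto the
`n`-cell `M` of `Y`. -/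
def CellularMap {X Y : Type*} [TopologicalSpace X] [TopologicalSpace Y]
    (CSX : CellStructure X) (CSY : CellStructure Y) (g : X → Y)
    (m n : ℕ) (E : Set X) (M : Set Y) : Prop :=
  E ∈ CSX.cells m ∧ M ∈ CSY.cells n ∧ Set.InjOn g E ∧ ContinuousOn g E ∧ g '' E = M ∧
    (∀ k : ℕ, ∀ F ∈ CSX.cells (m + k), F ⊆ E → g '' F ∈ CSY.cells (n + k)) ∧
    (∀ k : ℕ, ∀ F' ∈ CSY.cells (n + k), F' ⊆ M → ∃ F ∈ CSX.cells (m + k), F ⊆ E ∧ g '' F = F')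

/-- `f` is piecewise cellular: there are subdivisions of `X` and `Y` into finitely
many cells (none contained in another, covering the space) such that `f` maps
corresponding pieces by cellular homeomorphisms. -/
def PiecewiseCellular {X Y : Type*} [TopologicalSpace X] [TopologicalSpace Y]
    (CSX : CellStructure X) (CSY : CellStructure Y) (f : X → Y) : Prop :=
  ∃ (k : ℕ) (EX : Fin k → ℕ × Set X) (EY : Fin k → ℕ × Set Y),
    (∀ i, (EX i).2 ∈ CSX.cells (EX i).1) ∧ (∀ i, (EY i).2 ∈ CSY.cells (EY i).1) ∧
    (∀ i j, i ≠ j → ¬(EX i).2 ⊆ (EX j).2) ∧ (∀ i j, i ≠ j → ¬(EY i).2 ⊆ (EY j).2) ∧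
    (⋃ i, (EX i).2) = Set.univ ∧ (⋃ i, (EY i).2) = Set.univ ∧
    ∀ i, CellularMap CSX CSY f (EX i).1 (EY i).1 (EX i).2 (EY i).2


/-!
For distinct points `x, y` let `N(x, y)` be the deepest level at which `x` and `y` lie in
intersecting cells. Exponential decay and cell separation make `d(x, y)` comparable to the
diameter of any `N(x, y)`-cell containing `x`, so `d(a, b) / d(a, c)` lies between constant
multiples of `min (r ^ j) (R ^ j)` and `max (R ^ j) (r ^ j)`, where `j = N(a, b) - N(a, c)`.
A piecewise cellular map shifts the levels of deep cells by a constant on each piece, hence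
changes `N` by a bounded amount. The geometric bounds in `Y` are powers of those in `X`, which
gives the quasisymmetry inequality with a gauge `t ↦ A ((κ t) ^ α + (κ t) ^ β)`.
-/

namespace IsMetricOn

variable {X : Type*} {d : X → X → ℝ}

lemma dist_pos (hd : IsMetricOn d) {x y : X} (h : x ≠ y) : 0 < d x y :=
  (hd.1 x y).lt_of_ne fun h' => h ((hd.2.1 x y).mp h'.symm)

lemma sdiam_nonneg (hd : IsMetricOn d) (S : Set X) : 0 ≤ sdiam d S :=
  Real.sSup_nonneg <| by rintro _ ⟨u, -, v, -, rfl⟩; exact hd.1 u v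

lemma sdist_le_dist (hd : IsMetricOn d) {S T : Set X} {x y : X} (hx : x ∈ S) (hy : y ∈ T) :
    sdist d S T ≤ d x y :=
  csInf_le ⟨0, by rintro _ ⟨u, -, v, -, rfl⟩; exact hd.1 u v⟩ (mem_image2_of_mem hx hy)

end IsMetricOn

namespace CellStructure

variable {X : Type*} [TopologicalSpace X] (CS : CellStructure X)

lemma univ_mem_cells_zero : univ ∈ CS.cells 0 := by
  rw [CS.root]; rfl

lemma exists_subcell_mem {n : ℕ} {E : Set X} (hE : E ∈ CS.cells n) {x : X} (hx : x ∈ E)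
    (k : ℕ) : ∃ F ∈ CS.cells (n + k), F ⊆ E ∧ x ∈ F := by
  induction k with
  | zero => exact ⟨E, hE, subset_rfl, hx⟩
  | succ k ih =>
    obtain ⟨F, hF, hFE, hxF⟩ := ih
    rw [CS.eq_sUnion_children _ F hF] at hxF
    obtain ⟨G, ⟨hG, hGF⟩, hxG⟩ := hxF
    exact ⟨G, hG, hGF.trans hFE, hxG⟩

lemma nonempty_of_mem {n : ℕ} {E : Set X} (hE : E ∈ CS.cells n) : E.Nonempty :=
  (CS.isConnected_cells n E hE).nonempty

lemma exists_mem_cell (n : ℕ) (x : X) : ∃ E ∈ CS.cells n, x ∈ E := by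
  obtain ⟨E, hE, -, hx⟩ := CS.exists_subcell_mem CS.univ_mem_cells_zero (mem_univ x) n
  exact ⟨E, by simpa using hE, hx⟩

lemma exists_supercell {m n : ℕ} (hmn : m ≤ n) {E : Set X} (hE : E ∈ CS.cells n) :
    ∃ A ∈ CS.cells m, E ⊆ A := by
  induction n, hmn using Nat.le_induction generalizing E with
  | base => exact ⟨E, hE, subset_rfl⟩
  | succ n _ ih =>
    obtain ⟨P, hP, hEP⟩ := CS.exists_parent n E hE
    obtain ⟨A, hA, hPA⟩ := ih hP
    exact ⟨A, hA, hEP.trans hPA⟩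

/-- Otherwise `E` would meet each piece in a finite set, since its ancestor at the level of
that piece is a different cell. -/
lemma exists_piece_superset {ι : Type*} [Finite ι] {P : ι → Set X} {m : ι → ℕ}
    (hP : ∀ i, P i ∈ CS.cells (m i)) (hcov : ⋃ i, P i = univ) {n : ℕ}
    (hmn : ∀ i, m i ≤ n)
    {E : Set X} (hE : E ∈ CS.cells n) (hEinf : E.Infinite) : ∃ i, E ⊆ P i := by
  by_contra! hnot
  refine hEinf ?_
  have hfin : ∀ i, (E ∩ P i).Finite := fun i => by
    obtain ⟨A, hA, hEA⟩ := CS.exists_supercell (hmn i) hE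
    have hAP : A ≠ P i := by rintro rfl; exact hnot i hEA
    exact (CS.inter_finite _ A hA _ (hP i) hAP).subset (inter_subset_inter_left _ hEA)
  simpa [← inter_iUnion, hcov] using Set.finite_iUnion hfin

end CellStructure

namespace IsUndistortedWith

variable {X : Type*} [TopologicalSpace X] {CS : CellStructure X} {d : X → X → ℝ}
  {r R C δ : ℝ} {m n : ℕ} {E E' : Set X}

lemma R_pos (hu : IsUndistortedWith CS.cells d r R C δ) : 0 < R :=
  hu.1.trans_le hu.2.1

lemma R_lt_one (hu : IsUndistortedWith CS.cells d r R C δ) : R < 1 :=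
  hu.2.2.1

lemma C_pos (hu : IsUndistortedWith CS.cells d r R C δ) : 0 < C :=
  zero_lt_one.trans_le hu.2.2.2.1

/-- With the convention `0 / 0 = 0`, the decay bound `1 / C ≤ diam E / diam E` rules out
`diam E = 0`, including the junk value of `sSup` on an unbounded set. -/
lemma sdiam_ne_zero (hu : IsUndistortedWith CS.cells d r R C δ) (hE : E ∈ CS.cells n) :
    sdiam d E ≠ 0 := by
  have hC := hu.C_pos
  obtain ⟨-, -, -, -, -, hdecay, -⟩ := hu
  intro h0
  have h := (hdecay n n le_rfl E hE E hE (by simpa using CS.nonempty_of_mem hE)).1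
  rw [h0, div_zero, Nat.sub_self, pow_zero] at h
  exact (one_div_pos.mpr hC).not_ge h

lemma bddAbove_image2 (hu : IsUndistortedWith CS.cells d r R C δ) (hE : E ∈ CS.cells n) :
    BddAbove (image2 d E E) := by
  by_contra h
  exact hu.sdiam_ne_zero hE (Real.sSup_of_not_bddAbove h)

lemma dist_le_sdiam (hu : IsUndistortedWith CS.cells d r R C δ) (hE : E ∈ CS.cells n)
    {x y : X} (hx : x ∈ E) (hy : y ∈ E) : d x y ≤ sdiam d E :=
  le_csSup (hu.bddAbove_image2 hE) (mem_image2_of_mem hx hy)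

lemma sdiam_pos (hu : IsUndistortedWith CS.cells d r R C δ) (hd : IsMetricOn d)
    (hE : E ∈ CS.cells n) : 0 < sdiam d E :=
  (hd.sdiam_nonneg E).lt_of_ne' (hu.sdiam_ne_zero hE)

lemma sdiam_decay (hu : IsUndistortedWith CS.cells d r R C δ) (hd : IsMetricOn d)
    (hmn : m ≤ n) (hE : E ∈ CS.cells m) (hE' : E' ∈ CS.cells n) (hEE' : (E ∩ E').Nonempty) :
    r ^ (n - m) / C * sdiam d E ≤ sdiam d E' ∧ sdiam d E' ≤ C * R ^ (n - m) * sdiam d E := by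
  have hpos := hu.sdiam_pos hd hE
  obtain ⟨-, -, -, -, -, hdecay, -⟩ := hu
  obtain ⟨h₁, h₂⟩ := hdecay m n hmn E hE E' hE' hEE'
  exact ⟨(le_div_iff₀ hpos).mp h₁, (div_le_iff₀ hpos).mp h₂⟩

lemma sdiam_le_mul_sdiam (hu : IsUndistortedWith CS.cells d r R C δ) (hd : IsMetricOn d)
    (hE : E ∈ CS.cells n) (hE' : E' ∈ CS.cells n) (hEE' : (E ∩ E').Nonempty) :
    sdiam d E' ≤ C * sdiam d E := by
  simpa using (hu.sdiam_decay hd le_rfl hE hE' hEE').2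

lemma min_zpow_div_mul_sdiam_le (hu : IsUndistortedWith CS.cells d r R C δ)
    (hd : IsMetricOn d) (hE : E ∈ CS.cells m) (hE' : E' ∈ CS.cells n)
    (hEE' : (E ∩ E').Nonempty) :
    min (r ^ ((n : ℤ) - m)) (R ^ ((n : ℤ) - m)) / C * sdiam d E ≤ sdiam d E' := by
  have hC := hu.C_pos
  rcases le_total m n with hmn | hnm
  · have hk : (n : ℤ) - m = ((n - m : ℕ) : ℤ) := by omega
    calc min (r ^ ((n : ℤ) - m)) (R ^ ((n : ℤ) - m)) / C * sdiam d E
        ≤ r ^ (n - m) / C * sdiam d E := by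
          rw [hk, zpow_natCast]
          gcongr
          · exact (hu.sdiam_pos hd hE).le
          · exact min_le_left _ _
      _ ≤ sdiam d E' := (hu.sdiam_decay hd hmn hE hE' hEE').1
  · have hk : (n : ℤ) - m = -((m - n : ℕ) : ℤ) := by omega
    have hRk : 0 < R ^ (m - n) := pow_pos hu.R_pos _
    calc min (r ^ ((n : ℤ) - m)) (R ^ ((n : ℤ) - m)) / C * sdiam d E
        ≤ (R ^ (m - n))⁻¹ / C * (C * R ^ (m - n) * sdiam d E') := by
          simp only [hk, zpow_neg, zpow_natCast]
          gcongr
          · exact (hu.sdiam_pos hd hE).le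
          · exact min_le_right _ _
          · exact (hu.sdiam_decay hd hnm hE' hE (by rwa [inter_comm])).2
      _ = sdiam d E' := by field_simp

lemma sdiam_le_mul_max_zpow_mul (hu : IsUndistortedWith CS.cells d r R C δ)
    (hd : IsMetricOn d) (hE : E ∈ CS.cells m) (hE' : E' ∈ CS.cells n)
    (hEE' : (E ∩ E').Nonempty) :
    sdiam d E' ≤ C * max (R ^ ((n : ℤ) - m)) (r ^ ((n : ℤ) - m)) * sdiam d E := by
  have hC := hu.C_pos
  have hE0 := (hu.sdiam_pos hd hE).le
  rcases le_total m n with hmn | hnm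
  · have hk : (n : ℤ) - m = ((n - m : ℕ) : ℤ) := by omega
    calc sdiam d E' ≤ C * R ^ (n - m) * sdiam d E := (hu.sdiam_decay hd hmn hE hE' hEE').2
      _ ≤ _ := by
          simp only [hk, zpow_natCast]
          gcongr
          exact le_max_left _ _
  · have hk : (n : ℤ) - m = -((m - n : ℕ) : ℤ) := by omega
    have hrk : 0 < r ^ (m - n) := pow_pos hu.1 _
    calc sdiam d E' = C * (r ^ (m - n))⁻¹ * (r ^ (m - n) / C * sdiam d E') := by field_simp
      _ ≤ C * (r ^ (m - n))⁻¹ * sdiam d E := by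
          gcongr
          exact (hu.sdiam_decay hd hnm hE' hE (by rwa [inter_comm])).1
      _ ≤ _ := by
          simp only [hk, zpow_neg, zpow_natCast]
          gcongr
          exact le_max_right _ _

/-- A finite cell would contain subcells of arbitrarily small positive diameter, whereas
the diameters of subsets of a finite set with positive diameter are bounded below. -/
lemma infinite_of_mem_cells (hu : IsUndistortedWith CS.cells d r R C δ) (hd : IsMetricOn d)
    (hE : E ∈ CS.cells n) : E.Infinite := by
  intro hfin
  set P := {t ∈ image2 d E E | 0 < t}
  have hsub : ∀ k, ∀ F ∈ CS.cells k, F ⊆ E → sdiam d F ∈ P := fun k F hF hFE => by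
    have hne := CS.nonempty_of_mem hF
    have hFfin := hfin.subset hFE
    exact ⟨image2_subset hFE hFE ((hne.image2 hne).csSup_mem (hFfin.image2 d hFfin)),
      hu.sdiam_pos hd hF⟩
  have hPfin : P.Finite := (hfin.image2 d hfin).subset (sep_subset _ _)
  obtain ⟨μ, hμ, hμ_le⟩ := P.exists_min_image id hPfin ⟨_, hsub n E hE subset_rfl⟩
  have hCE : 0 < C * sdiam d E := mul_pos hu.C_pos (hu.sdiam_pos hd hE)
  obtain ⟨k, hk⟩ := exists_pow_lt_of_lt_one (div_pos hμ.2 hCE) hu.R_lt_one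
  obtain ⟨x, hx⟩ := CS.nonempty_of_mem hE
  obtain ⟨F, hF, hFE, hxF⟩ := CS.exists_subcell_mem hE hx k
  have hμF : μ ≤ sdiam d F := hμ_le _ (hsub _ F hF hFE)
  have hF_le := (hu.sdiam_decay hd (Nat.le_add_right n k) hE hF ⟨x, hx, hxF⟩).2
  rw [Nat.add_sub_cancel_left] at hF_le
  rw [lt_div_iff₀ hCE] at hk
  nlinarith

end IsUndistortedWith

namespace CellStructure

variable {X : Type*} [TopologicalSpace X] (CS : CellStructure X)

def AdjacentAt (n : ℕ) (x y : X) : Prop :=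
  ∃ E ∈ CS.cells n, ∃ F ∈ CS.cells n, x ∈ E ∧ y ∈ F ∧ (E ∩ F).Nonempty

/-- Junk value `0` when the set of levels is unbounded, e.g. for `x = y`. -/
noncomputable def scale (x y : X) : ℕ :=
  sSup {n | CS.AdjacentAt n x y}

variable {CS}

lemma adjacentAt_zero (x y : X) : CS.AdjacentAt 0 x y :=
  ⟨univ, CS.univ_mem_cells_zero, univ, CS.univ_mem_cells_zero, mem_univ x, mem_univ y,
    ⟨x, mem_univ x, mem_univ x⟩⟩

lemma adjacentAt_min {m n : ℕ} {E F : Set X} (hE : E ∈ CS.cells m) (hF : F ∈ CS.cells n)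
    {x y : X} (hx : x ∈ E) (hy : y ∈ F) (hEF : (E ∩ F).Nonempty) :
    CS.AdjacentAt (min m n) x y := by
  obtain ⟨A, hA, hEA⟩ := CS.exists_supercell (min_le_left m n) hE
  obtain ⟨B, hB, hFB⟩ := CS.exists_supercell (min_le_right m n) hF
  exact ⟨A, hA, B, hB, hEA hx, hFB hy, hEF.mono (inter_subset_inter hEA hFB)⟩

variable {x y : X} (hbdd : BddAbove {n | CS.AdjacentAt n x y})
include hbdd

lemma le_scale {n : ℕ} (hn : CS.AdjacentAt n x y) : n ≤ CS.scale x y :=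
  le_csSup hbdd hn

lemma adjacentAt_scale : CS.AdjacentAt (CS.scale x y) x y :=
  Nat.sSup_mem ⟨0, adjacentAt_zero x y⟩ hbdd

lemma not_adjacentAt_scale_add_one : ¬CS.AdjacentAt (CS.scale x y + 1) x y :=
  fun h => (le_scale hbdd h).not_gt (Nat.lt_succ_self _)

end CellStructure

namespace IsUndistortedWith

variable {X : Type*} [TopologicalSpace X] {CS : CellStructure X} {d : X → X → ℝ}
  {r R C δ : ℝ} {n : ℕ} {E : Set X} {x y : X}

lemma dist_le_mul_sdiam (hu : IsUndistortedWith CS.cells d r R C δ) (hd : IsMetricOn d)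
    (hadj : CS.AdjacentAt n x y) (hE : E ∈ CS.cells n) (hx : x ∈ E) :
    d x y ≤ (1 + C) * C * sdiam d E := by
  obtain ⟨E₀, hE₀, F₀, hF₀, hxE₀, hyF₀, p, hpE₀, hpF₀⟩ := hadj
  have hE₀_le := hu.sdiam_le_mul_sdiam hd hE hE₀ ⟨x, hx, hxE₀⟩
  have hF₀_le := hu.sdiam_le_mul_sdiam hd hE₀ hF₀ ⟨p, hpE₀, hpF₀⟩
  calc d x y ≤ d x p + d p y := hd.2.2.2 x p y
    _ ≤ sdiam d E₀ + sdiam d F₀ :=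
        add_le_add (hu.dist_le_sdiam hE₀ hxE₀ hpE₀) (hu.dist_le_sdiam hF₀ hpF₀ hyF₀)
    _ ≤ (1 + C) * sdiam d E₀ := by linarith
    _ ≤ (1 + C) * C * sdiam d E := by
        rw [mul_assoc]
        gcongr
        linarith [hu.C_pos]

lemma mul_sdiam_le_dist (hu : IsUndistortedWith CS.cells d r R C δ) (hd : IsMetricOn d)
    (hnadj : ¬CS.AdjacentAt (n + 1) x y) (hE : E ∈ CS.cells n) (hx : x ∈ E) :
    δ * r / C * sdiam d E ≤ d x y := by
  obtain ⟨-, -, -, -, hδ, -, hsep⟩ := id hu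
  obtain ⟨E', hE', -, hxE'⟩ := CS.exists_subcell_mem hE hx 1
  obtain ⟨F', hF', hyF'⟩ := CS.exists_mem_cell (n + 1) y
  have hdisj : Disjoint E' F' := by
    by_contra h
    exact hnadj ⟨E', hE', F', hF', hxE', hyF', not_disjoint_iff_nonempty_inter.mp h⟩
  have hE'_ge := (hu.sdiam_decay hd (Nat.le_add_right n 1) hE hE' ⟨x, hx, hxE'⟩).1
  rw [Nat.add_sub_cancel_left, pow_one] at hE'_ge
  calc δ * r / C * sdiam d E = δ * (r / C * sdiam d E) := by ring
    _ ≤ δ * sdiam d E' := by gcongr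
    _ ≤ sdist d E' F' := hsep _ E' hE' F' hF' hdisj
    _ ≤ d x y := hd.sdist_le_dist hxE' hyF'

lemma bddAbove_adjacentAt (hu : IsUndistortedWith CS.cells d r R C δ) (hd : IsMetricOn d)
    (hxy : x ≠ y) : BddAbove {n | CS.AdjacentAt n x y} := by
  have hC := hu.C_pos
  have hD := hu.sdiam_pos hd CS.univ_mem_cells_zero
  have hK : 0 < (1 + C) * C * C * sdiam d univ := by positivity
  obtain ⟨N, hN⟩ := exists_pow_lt_of_lt_one (div_pos (hd.dist_pos hxy) hK) hu.R_lt_one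
  rw [lt_div_iff₀ hK] at hN
  refine ⟨N, fun n hn => ?_⟩
  by_contra! hNn
  obtain ⟨E, hE, hxE⟩ := CS.exists_mem_cell n x
  have hE_le := (hu.sdiam_decay hd n.zero_le CS.univ_mem_cells_zero hE ⟨x, trivial, hxE⟩).2
  rw [Nat.sub_zero] at hE_le
  have hRn : R ^ n ≤ R ^ N := pow_le_pow_of_le_one hu.R_pos.le hu.R_lt_one.le hNn.le
  have := calc d x y ≤ (1 + C) * C * sdiam d E := hu.dist_le_mul_sdiam hd hn hE hxE
    _ ≤ (1 + C) * C * (C * R ^ n * sdiam d univ) := by gcongr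
    _ ≤ (1 + C) * C * (C * R ^ N * sdiam d univ) := by gcongr
    _ = R ^ N * ((1 + C) * C * C * sdiam d univ) := by ring
    _ < d x y := hN
  exact this.false

lemma min_zpow_le_mul_dist_div_dist (hu : IsUndistortedWith CS.cells d r R C δ)
    (hd : IsMetricOn d) {a b z : X} (hab : a ≠ b) (haz : a ≠ z) :
    min (r ^ ((CS.scale a b : ℤ) - CS.scale a z)) (R ^ ((CS.scale a b : ℤ) - CS.scale a z)) ≤
      (1 + C) * C ^ 3 / (δ * r) * (d a b / d a z) := by
  have hC := hu.C_pos
  obtain ⟨hr, -, -, -, hδ, -⟩ := id hu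
  obtain ⟨E₁, hE₁, haE₁⟩ := CS.exists_mem_cell (CS.scale a b) a
  obtain ⟨E₂, hE₂, haE₂⟩ := CS.exists_mem_cell (CS.scale a z) a
  have hab_ge := hu.mul_sdiam_le_dist hd
    (CS.not_adjacentAt_scale_add_one (hu.bddAbove_adjacentAt hd hab)) hE₁ haE₁
  have haz_le := hu.dist_le_mul_sdiam hd
    (CS.adjacentAt_scale (hu.bddAbove_adjacentAt hd haz)) hE₂ haE₂
  have hE₁_ge := hu.min_zpow_div_mul_sdiam_le hd hE₂ hE₁ ⟨a, haE₂, haE₁⟩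
  set j : ℤ := CS.scale a b - CS.scale a z
  set μ := min (r ^ j) (R ^ j)
  have hμ : 0 ≤ μ := le_min (by positivity) (by have := hu.R_pos; positivity)
  rw [← mul_div_assoc, le_div_iff₀ (hd.dist_pos haz)]
  calc μ * d a z ≤ μ * ((1 + C) * C * sdiam d E₂) := by gcongr
    _ = (1 + C) * C ^ 2 * (μ / C * sdiam d E₂) := by field_simp
    _ ≤ (1 + C) * C ^ 2 * sdiam d E₁ := by gcongr
    _ = (1 + C) * C ^ 3 / (δ * r) * (δ * r / C * sdiam d E₁) := by field_simp
    _ ≤ (1 + C) * C ^ 3 / (δ * r) * d a b := by gcongr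

lemma dist_div_dist_le_mul_max_zpow (hu : IsUndistortedWith CS.cells d r R C δ)
    (hd : IsMetricOn d) {a b z : X} (hab : a ≠ b) (haz : a ≠ z) :
    d a b / d a z ≤ (1 + C) * C ^ 3 / (δ * r) *
      max (R ^ ((CS.scale a b : ℤ) - CS.scale a z))
        (r ^ ((CS.scale a b : ℤ) - CS.scale a z)) := by
  have hC := hu.C_pos
  obtain ⟨hr, -, -, -, hδ, -⟩ := id hu
  obtain ⟨E₁, hE₁, haE₁⟩ := CS.exists_mem_cell (CS.scale a b) a
  obtain ⟨E₂, hE₂, haE₂⟩ := CS.exists_mem_cell (CS.scale a z) a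
  have hab_le := hu.dist_le_mul_sdiam hd
    (CS.adjacentAt_scale (hu.bddAbove_adjacentAt hd hab)) hE₁ haE₁
  have haz_ge := hu.mul_sdiam_le_dist hd
    (CS.not_adjacentAt_scale_add_one (hu.bddAbove_adjacentAt hd haz)) hE₂ haE₂
  have hE₁_le := hu.sdiam_le_mul_max_zpow_mul hd hE₂ hE₁ ⟨a, haE₂, haE₁⟩
  set j : ℤ := CS.scale a b - CS.scale a z
  set M := max (R ^ j) (r ^ j)
  have hM : 0 ≤ M := le_max_of_le_right (by positivity)
  rw [div_le_iff₀ (hd.dist_pos haz)]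
  calc d a b ≤ (1 + C) * C * sdiam d E₁ := hab_le
    _ ≤ (1 + C) * C * (C * M * sdiam d E₂) := by gcongr
    _ = (1 + C) * C ^ 3 / (δ * r) * M * (δ * r / C * sdiam d E₂) := by field_simp
    _ ≤ (1 + C) * C ^ 3 / (δ * r) * M * d a z := by gcongr

end IsUndistortedWith

section ScaleTransfer

variable {X Y : Type*} [TopologicalSpace X] [TopologicalSpace Y]
  {CSX : CellStructure X} {CSY : CellStructure Y}

lemma CellularMap.image_mem_of_leftInverse {f : X → Y} {g : Y → X}
    (hgf : Function.LeftInverse g f) {m n : ℕ} {E : Set X} {M : Set Y}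
    (h : CellularMap CSX CSY f m n E M) (k : ℕ) :
    ∀ F' ∈ CSY.cells (n + k), F' ⊆ M → g '' F' ∈ CSX.cells (m + k) := by
  intro F' hF' hF'M
  obtain ⟨F, hF, -, rfl⟩ := h.2.2.2.2.2.2 k F' hF' hF'M
  rwa [hgf.image_image]

/-- For `N` above the levels `m i ≤ K` of the pieces, a pair of adjacent `N`-cells lies in
pieces and is mapped to a pair of intersecting cells of levels at least `N - K`. -/
theorem scale_le_scale_add {dX : X → X → ℝ} {dY : Y → Y → ℝ}
    {rX RX CX δX rY RY CY δY : ℝ}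
    (huX : IsUndistortedWith CSX.cells dX rX RX CX δX) (hdX : IsMetricOn dX)
    (huY : IsUndistortedWith CSY.cells dY rY RY CY δY) (hdY : IsMetricOn dY)
    {ι : Type*} [Finite ι] {P : ι → Set X} {m n : ι → ℕ}
    (hP : ∀ i, P i ∈ CSX.cells (m i)) (hcov : ⋃ i, P i = univ) {f : X → Y}
    (hf : ∀ i k, ∀ F ∈ CSX.cells (m i + k), F ⊆ P i → f '' F ∈ CSY.cells (n i + k)) :
    ∃ K : ℕ, ∀ x y, f x ≠ f y → CSX.scale x y ≤ CSY.scale (f x) (f y) + K := by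
  obtain ⟨K, hK⟩ := (finite_range m).bddAbove
  refine ⟨K, fun x y hfxy => ?_⟩
  set N := CSX.scale x y
  rcases le_or_gt N K with hNK | hKN
  · omega
  have hmN : ∀ i, m i ≤ N := fun i => (hK (mem_range_self i)).trans hKN.le
  have himage : ∀ G ∈ CSX.cells N, ∃ l, N ≤ l + K ∧ f '' G ∈ CSY.cells l := by
    intro G hG
    obtain ⟨i, hGi⟩ :=
      CSX.exists_piece_superset hP hcov hmN hG (huX.infinite_of_mem_cells hdX hG)
    have hmi : m i ≤ K := hK (mem_range_self i)
    refine ⟨n i + (N - m i), by omega, hf i _ G ?_ hGi⟩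
    rwa [Nat.add_sub_cancel' (hmN i)]
  obtain ⟨E, hE, F, hF, hxE, hyF, p, hpE, hpF⟩ :=
    CSX.adjacentAt_scale (huX.bddAbove_adjacentAt hdX (ne_of_apply_ne f hfxy))
  obtain ⟨l, hl, hfE⟩ := himage E hE
  obtain ⟨l', hl', hfF⟩ := himage F hF
  have := CSY.le_scale (huY.bddAbove_adjacentAt hdY hfxy)
    (CSY.adjacentAt_min hfE hfF (mem_image_of_mem f hxE) (mem_image_of_mem f hyF)
      ⟨f p, mem_image_of_mem f hpE, mem_image_of_mem f hpF⟩)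
  omega

end ScaleTransfer

lemma max_zpow_le_zpow_neg_mul {r R : ℝ} (hr : 0 < r) (hrR : r ≤ R) (hR : R ≤ 1) {i j : ℤ}
    {K : ℕ} (hij : i - K ≤ j) :
    max (R ^ j) (r ^ j) ≤ r ^ (-(K : ℤ)) * max (R ^ i) (r ^ i) := by
  have hR₀ := hr.trans_le hrR
  have hji : -(K : ℤ) + i ≤ j := by omega
  calc max (R ^ j) (r ^ j) ≤ max (R ^ (-(K : ℤ) + i)) (r ^ (-(K : ℤ) + i)) :=
        max_le_max (zpow_le_zpow_right_of_le_one₀ hR₀ hR hji)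
          (zpow_le_zpow_right_of_le_one₀ hr (hrR.trans hR) hji)
    _ ≤ max (r ^ (-(K : ℤ)) * R ^ i) (r ^ (-(K : ℤ)) * r ^ i) := by
        rw [zpow_add₀ hR₀.ne', zpow_add₀ hr.ne']
        gcongr
        rw [zpow_neg, zpow_neg, zpow_natCast, zpow_natCast]
        gcongr
    _ = r ^ (-(K : ℤ)) * max (R ^ i) (r ^ i) := (mul_max_of_nonneg _ _ (by positivity)).symm

lemma zpow_rpow_log_div_log {a b : ℝ} (ha : 0 < a) (ha₁ : a ≠ 1) (hb : 0 < b) (j : ℤ) :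
    (a ^ j) ^ (Real.log b / Real.log a) = b ^ j := by
  have hlog : Real.log a ≠ 0 := Real.log_ne_zero_of_pos_of_ne_one ha ha₁
  rw [Real.rpow_def_of_pos (zpow_pos ha j), Real.log_zpow, mul_assoc, mul_div_cancel₀ _ hlog,
    ← Real.log_zpow, Real.exp_log (zpow_pos hb j)]

lemma zpow_le_zpow_left_of_nonpos {a b : ℝ} (ha : 0 < a) (hab : a ≤ b) {j : ℤ}
    (hj : j ≤ 0) : b ^ j ≤ a ^ j := by
  have h := inv_anti₀ (zpow_pos ha _) (zpow_le_zpow_left₀ (neg_nonneg.mpr hj) ha.le hab)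
  rwa [← zpow_neg, ← zpow_neg, neg_neg] at h

/-- The two-sided geometric bounds of one undistorted metric are powers of those of another:
`R' ^ j = (r ^ j) ^ (log R' / log r)` and `r' ^ j = (R ^ j) ^ (log r' / log R)`. -/
lemma max_zpow_le_rpow_add_rpow {r R r' R' : ℝ} (hr : 0 < r) (hrR : r ≤ R) (hR : R < 1)
    (hr' : 0 < r') (hrR' : r' ≤ R') (j : ℤ) :
    max (R' ^ j) (r' ^ j) ≤ min (r ^ j) (R ^ j) ^ (Real.log R' / Real.log r) +
      min (r ^ j) (R ^ j) ^ (Real.log r' / Real.log R) := by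
  have hR₀ := hr.trans_le hrR
  rcases le_total 0 j with hj | hj
  · rw [min_eq_left (zpow_le_zpow_left₀ hj hr.le hrR),
      max_eq_left (zpow_le_zpow_left₀ hj hr'.le hrR'),
      zpow_rpow_log_div_log hr (hrR.trans_lt hR).ne (hr'.trans_le hrR')]
    exact le_add_of_nonneg_right (Real.rpow_nonneg (zpow_pos hr j).le _)
  · rw [min_eq_right (zpow_le_zpow_left_of_nonpos hr hrR hj),
      max_eq_right (zpow_le_zpow_left_of_nonpos hr' hrR' hj),
      zpow_rpow_log_div_log hR₀ hR.ne hr']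
    exact le_add_of_nonneg_left (Real.rpow_nonneg (zpow_pos hR₀ j).le _)

lemma isQSGauge_mul_rpow_add_rpow {A c α β : ℝ} (hA : 0 < A) (hc : 0 < c) (hα : 0 < α)
    (hβ : 0 < β) : IsQSGauge fun t => A * ((c * t) ^ α + (c * t) ^ β) := by
  have hcont : Continuous fun t : ℝ => A * ((c * t) ^ α + (c * t) ^ β) := by
    fun_prop (disch := positivity)
  have hmono : StrictMonoOn (fun t : ℝ => A * ((c * t) ^ α + (c * t) ^ β)) (Ici 0) := by
    intro s hs t _ hst
    have hcs : 0 ≤ c * s := mul_nonneg hc.le hs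
    have hcst : c * s < c * t := by gcongr
    dsimp only
    gcongr A * (?_ + ?_)
    · exact Real.rpow_lt_rpow hcs hcst hα
    · exact Real.rpow_lt_rpow hcs hcst hβ
  have hzero : (fun t : ℝ => A * ((c * t) ^ α + (c * t) ^ β)) 0 = 0 := by
    simp [Real.zero_rpow hα.ne', Real.zero_rpow hβ.ne']
  refine ⟨hcont.continuousOn, hmono, hzero, fun t ht => ?_, fun u hu => ?_⟩
  · have : 0 ≤ c * t := mul_nonneg hc.le ht
    exact mem_Ici.mpr (by positivity)
  · set T := (u / A) ^ α⁻¹ / c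
    have hT : 0 ≤ T := by have : 0 ≤ u := hu; positivity
    have hcT : (c * T) ^ α = u / A := by
      rw [mul_div_cancel₀ _ hc.ne', ← Real.rpow_mul (div_nonneg hu hA.le),
        inv_mul_cancel₀ hα.ne', Real.rpow_one]
    have huT : u ≤ A * ((c * T) ^ α + (c * T) ^ β) := by
      rw [hcT, mul_add, mul_div_cancel₀ _ hA.ne']
      exact le_add_of_nonneg_right (by positivity)
    obtain ⟨t, ht, rfl⟩ :=
      intermediate_value_Icc hT hcont.continuousOn ⟨hzero.trans_le hu, huT⟩
    exact ⟨t, ht.1, rfl⟩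

theorem exists_isQSGauge_qsIneq_of_scale_sub_le {X Y : Type*} [TopologicalSpace X]
    [TopologicalSpace Y] {CSX : CellStructure X} {CSY : CellStructure Y}
    {dX : X → X → ℝ} {dY : Y → Y → ℝ} {rX RX CX δX rY RY CY δY : ℝ}
    (huX : IsUndistortedWith CSX.cells dX rX RX CX δX) (hdX : IsMetricOn dX)
    (huY : IsUndistortedWith CSY.cells dY rY RY CY δY) (hdY : IsMetricOn dY)
    {f : X → Y} (hf : Function.Injective f) (K : ℕ)
    (hK : ∀ a b z, a ≠ b → a ≠ z → (CSX.scale a b : ℤ) - CSX.scale a z - K ≤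
      (CSY.scale (f a) (f b) : ℤ) - CSY.scale (f a) (f z)) :
    ∃ η, IsQSGauge η ∧ QSIneq dX dY f η := by
  obtain ⟨hrX, hrRX, hRX, hCX, hδX, -⟩ := id huX
  obtain ⟨hrY, hrRY, hRY, hCY, hδY, -⟩ := id huY
  set κX := (1 + CX) * CX ^ 3 / (δX * rX)
  set κY := (1 + CY) * CY ^ 3 / (δY * rY)
  set α := Real.log RY / Real.log rX
  set β := Real.log rY / Real.log RX
  have hα : 0 < α := div_pos_of_neg_of_neg (Real.log_neg (hrY.trans_le hrRY) hRY)
    (Real.log_neg hrX (hrRX.trans_lt hRX))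
  have hβ : 0 < β := div_pos_of_neg_of_neg (Real.log_neg hrY (hrRY.trans_lt hRY))
    (Real.log_neg (hrX.trans_le hrRX) hRX)
  refine ⟨fun t => κY * rY ^ (-(K : ℤ)) * ((κX * t) ^ α + (κX * t) ^ β),
    isQSGauge_mul_rpow_add_rpow (by positivity) (by positivity) hα hβ,
    fun a b z hab haz _ => ?_⟩
  set j := (CSX.scale a b : ℤ) - CSX.scale a z
  set μ := min (rX ^ j) (RX ^ j)
  have hμ : 0 ≤ μ := le_min (by positivity) (zpow_pos (hrX.trans_le hrRX) j).le
  have hμ_le : μ ≤ κX * (dX a b / dX a z) := huX.min_zpow_le_mul_dist_div_dist hdX hab haz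
  calc dY (f a) (f b) / dY (f a) (f z)
      ≤ κY * max (RY ^ ((CSY.scale (f a) (f b) : ℤ) - CSY.scale (f a) (f z)))
          (rY ^ ((CSY.scale (f a) (f b) : ℤ) - CSY.scale (f a) (f z))) :=
        huY.dist_div_dist_le_mul_max_zpow hdY (hf.ne hab) (hf.ne haz)
    _ ≤ κY * (rY ^ (-(K : ℤ)) * max (RY ^ j) (rY ^ j)) := by
        gcongr
        exact max_zpow_le_zpow_neg_mul hrY hrRY hRY.le (hK a b z hab haz)
    _ ≤ κY * (rY ^ (-(K : ℤ)) * (μ ^ α + μ ^ β)) := by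
        gcongr
        exact max_zpow_le_rpow_add_rpow hrX hrRX hRX hrY hrRY j
    _ ≤ κY * rY ^ (-(K : ℤ)) *
          ((κX * (dX a b / dX a z)) ^ α + (κX * (dX a b / dX a z)) ^ β) := by
        rw [← mul_assoc]
        gcongr

theorem stmt12_general {X Y : Type*} [TopologicalSpace X] [TopologicalSpace Y]
    (CSX : CellStructure X) (CSY : CellStructure Y)
    (dX : X → X → ℝ) (dY : Y → Y → ℝ)
    (hmetX : IsMetricOn dX) (hundX : IsUndistorted CSX.cells dX)
    (hmetY : IsMetricOn dY) (hundY : IsUndistorted CSY.cells dY)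
    (f : X → Y) (hf : IsHomeomorph f) (hpc : PiecewiseCellular CSX CSY f) :
    ∃ η : ℝ → ℝ, IsQSGauge η ∧ QSIneq dX dY f η := by
  obtain ⟨rX, RX, CX, δX, huX⟩ := hundX
  obtain ⟨rY, RY, CY, δY, huY⟩ := hundY
  obtain ⟨k, EX, EY, -, -, -, -, hcovX, hcovY, hcell⟩ := hpc
  obtain ⟨g, hgf, -⟩ := Function.bijective_iff_has_inverse.mp hf.bijective
  obtain ⟨K₁, hK₁⟩ := scale_le_scale_add huX hmetX huY hmetY (fun i => (hcell i).1) hcovX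
    fun i => (hcell i).2.2.2.2.2.1
  obtain ⟨K₂, hK₂⟩ := scale_le_scale_add huY hmetY huX hmetX (fun i => (hcell i).2.1) hcovY
    fun i => (hcell i).image_mem_of_leftInverse hgf
  refine exists_isQSGauge_qsIneq_of_scale_sub_le huX hmetX huY hmetY hf.injective (K₁ + K₂)
    fun a b z hab haz => ?_
  have hab' := hK₁ a b (hf.injective.ne hab)
  have haz' := hK₂ (f a) (f z) (by rwa [hgf a, hgf z])
  rw [hgf a, hgf z] at haz'
  omega

/-- Any piecewise cellular homeomorphism between finitely ramified
fractals with undistorted metrics is a quasisymmetry. -/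
theorem stmt12 {X Y : Type*} [TopologicalSpace X] [CompactSpace X] [ConnectedSpace X]
    [TopologicalSpace.MetrizableSpace X]
    [TopologicalSpace Y] [CompactSpace Y] [ConnectedSpace Y]
    [TopologicalSpace.MetrizableSpace Y]
    (CSX : CellStructure X) (CSY : CellStructure Y)
    (dX : X → X → ℝ) (dY : Y → Y → ℝ)
    (hmetX : IsMetricOn dX) (htopX : InducesTopology dX) (hundX : IsUndistorted CSX.cells dX)
    (hmetY : IsMetricOn dY) (htopY : InducesTopology dY) (hundY : IsUndistorted CSY.cells dY)
    (f : X → Y) (hf : IsHomeomorph f) (hpc : PiecewiseCellular CSX CSY f) :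
    ∃ η : ℝ → ℝ, IsQSGauge η ∧ QSIneq dX dY f η :=
  stmt12_general CSX CSY dX dY hmetX hundX hmetY hundY f hf hpc
end

section
/- Let (X, d) be a compact, connected, locally connected metric space and let f : X → X be a covering map which is expanding: there exist ε > 0 and λ > 1 such that d(f(p), f(q)) ≥ λ·d(p,q) whenever d(p,q) < ε. Then there exists δ > 0 such that for every connected set C ⊆ X with diam(C) < δ and every n ≥ 1, each connected component of f⁻ⁿ(C) has diameter at most λ⁻ⁿ·diam(C) and is mapped homeomorphically onto C by fⁿ. -/
/-!
Take `δ ≤ ε` below a Lebesgue number of the cover of `X` by trivializing neighbourhoods of `f`.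
Over a connected `C` of diameter `< δ` the fibre coordinate of the trivialization is constant
on each component of `f ⁻¹' C`, so the components are the sheets `c ↦ t.symm (c, i)` over `C`,
each mapped homeomorphically onto `C`. A connected set `D` mapped into `C` has no two points at
distance in the gap `(λ⁻¹ diam C, ε)`, by expansion; connectedness then keeps all of `D` within
`λ⁻¹ diam C` of any of its points. Finally the components of `f^[n+1] ⁻¹' C` are those of
`f ⁻¹' K` for the components `K` of `f^[n] ⁻¹' C`, and induction on `n` finishes.
-/

open Set Metric Function

section Expanding

variable {X Y : Type*} [PseudoMetricSpace X] [PseudoMetricSpace Y]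

theorem diam_le_inv_mul_diam_of_mapsTo {f : X → Y} {ε lam : ℝ} (hlam : 0 < lam)
    (hexp : ∀ p q : X, dist p q < ε → lam * dist p q ≤ dist (f p) (f q))
    {D : Set X} {C : Set Y} (hD : IsPreconnected D) (hDC : MapsTo f D C)
    (hCb : Bornology.IsBounded C) (hC : diam C < lam * ε) :
    diam D ≤ lam⁻¹ * diam C := by
  set ρ := lam⁻¹ * diam C
  have hρ : 0 ≤ ρ := by positivity
  have hρε : ρ < ε := by rwa [inv_mul_lt_iff₀ hlam]
  have hgap : ∀ p ∈ D, ∀ q ∈ D, dist p q < ε → dist p q ≤ ρ := fun p hp q hq hpq => by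
    rw [le_inv_mul_iff₀ hlam]
    exact (hexp p q hpq).trans (dist_le_diam_of_mem hCb (hDC hp) (hDC hq))
  refine diam_le_of_forall_dist_le hρ fun p hp q hq => ?_
  by_contra! hpq
  have hcover : D ⊆ ball p ε ∪ {y | ρ < dist p y} := fun y _ =>
    (le_or_gt (dist p y) ρ).imp (fun h => mem_ball'.2 (h.trans_lt hρε)) id
  obtain ⟨y, hy, hyε, hyρ⟩ := hD _ _ isOpen_ball
    (isOpen_lt continuous_const (continuous_const.dist continuous_id)) hcover
    ⟨p, hp, mem_ball_self (hρ.trans_lt hρε)⟩ ⟨q, hq, hpq⟩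
  exact (hgap p hp y hy (mem_ball'.1 hyε)).not_gt hyρ

end Expanding

section Components

variable {X Y : Type*} [TopologicalSpace X] [TopologicalSpace Y]

theorem connectedComponentIn_preimage_connectedComponentIn {f : X → Y} (hf : Continuous f)
    {S : Set Y} {x : X} (hx : x ∈ f ⁻¹' S) :
    connectedComponentIn (f ⁻¹' connectedComponentIn S (f x)) x =
      connectedComponentIn (f ⁻¹' S) x := by
  refine (connectedComponentIn_mono x
    (preimage_mono (connectedComponentIn_subset S _))).antisymm ?_
  have hK := isPreconnected_connectedComponentIn (F := f ⁻¹' S) (x := x)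
  refine hK.subset_connectedComponentIn (mem_connectedComponentIn hx) fun y hy => ?_
  refine (hK.image f hf.continuousOn).subset_connectedComponentIn
    ⟨x, mem_connectedComponentIn hx, rfl⟩ ?_ (mem_image_of_mem f hy)
  exact image_subset_iff.2 (connectedComponentIn_subset _ _)

def MapsHomeomorphically (f : X → Y) (A : Set X) (B : Set Y) : Prop :=
  ∃ e : A ≃ₜ B, ∀ z : A, (e z : Y) = f z

theorem MapsHomeomorphically.comp {Z : Type*} [TopologicalSpace Z] {g : Y → Z} {f : X → Y}
    {A : Set X} {B : Set Y} {C : Set Z} (hg : MapsHomeomorphically g B C)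
    (hf : MapsHomeomorphically f A B) : MapsHomeomorphically (g ∘ f) A C := by
  obtain ⟨eg, heg⟩ := hg
  obtain ⟨ef, hef⟩ := hf
  exact ⟨ef.trans eg, fun z => by simp [heg, hef]⟩

theorem mapsHomeomorphically_image_of_leftInvOn {f : X → Y} {σ : Y → X} {C : Set Y}
    (hf : ContinuousOn f (σ '' C)) (hσ : ContinuousOn σ C) (hfσ : LeftInvOn f σ C) :
    MapsHomeomorphically f (σ '' C) C :=
  ⟨{ toFun := fun z => ⟨f z, hfσ.mapsTo (surjOn_image σ C) z.2⟩
     invFun := fun c => ⟨σ c, mem_image_of_mem σ c.2⟩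
     left_inv := fun z => Subtype.ext (hfσ.rightInvOn_image z.2)
     right_inv := fun c => Subtype.ext (hfσ c.2)
     continuous_toFun := hf.domRestrict.subtype_mk _
     continuous_invFun := hσ.domRestrict.subtype_mk _ }, fun _ => rfl⟩

end Components

namespace Bundle.Trivialization

variable {E X I : Type*} [TopologicalSpace E] [TopologicalSpace X] [TopologicalSpace I]
  [DiscreteTopology I] {f : E → X} (t : Trivialization I f) {C : Set X}

theorem connectedComponentIn_preimage_eq_image (hC : IsPreconnected C) (hCt : C ⊆ t.baseSet)
    {x : E} (hx : x ∈ f ⁻¹' C) :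
    connectedComponentIn (f ⁻¹' C) x =
      (fun c => t.toOpenPartialHomeomorph.symm (c, (t x).2)) '' C := by
  have hsource : f ⁻¹' C ⊆ t.source := fun y hy => t.mem_source.2 (hCt hy)
  have hK := connectedComponentIn_subset (f ⁻¹' C) x
  refine Subset.antisymm (fun y hy => ?_) ?_
  · have hsheet : (t y).2 = (t x).2 :=
      isPreconnected_connectedComponentIn.constant (f := fun y => (t y).2)
        (continuous_snd.comp_continuousOn
          (t.toOpenPartialHomeomorph.continuousOn.mono (hK.trans hsource)))
        hy (mem_connectedComponentIn hx)
    exact ⟨f y, hK hy, hsheet ▸ t.symm_apply_mk_proj (hsource (hK hy))⟩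
  · refine (hC.image _ (t.continuousOn_symm_prodMk_left.mono hCt)).subset_connectedComponentIn
      ⟨f x, hx, t.symm_apply_mk_proj (hsource hx)⟩ ?_
    rintro _ ⟨c, hc, rfl⟩
    rwa [mem_preimage, t.proj_symm_apply' (hCt hc)]

theorem mapsHomeomorphically_connectedComponentIn_preimage (hC : IsPreconnected C)
    (hCt : C ⊆ t.baseSet) {x : E} (hx : x ∈ f ⁻¹' C) :
    MapsHomeomorphically f (connectedComponentIn (f ⁻¹' C) x) C := by
  rw [t.connectedComponentIn_preimage_eq_image hC hCt hx]
  refine mapsHomeomorphically_image_of_leftInvOn (t.continuousOn_proj.mono ?_)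
    (t.continuousOn_symm_prodMk_left.mono hCt) fun c hc => t.proj_symm_apply' (hCt hc)
  rintro _ ⟨c, hc, rfl⟩
  exact t.map_target (t.mem_target.2 (hCt hc))

end Bundle.Trivialization

namespace IsCoveringMap

variable {E X : Type*} {f : E → X}

theorem surjective_of_compactSpace [TopologicalSpace E] [TopologicalSpace X] [CompactSpace E]
    [T2Space X] [PreconnectedSpace X] [Nonempty E] (hf : IsCoveringMap f) : Surjective f :=
  range_eq_univ.1 <| IsClopen.eq_univ
    ⟨(isCompact_range hf.continuous).isClosed, hf.isOpenMap.isOpen_range⟩ (range_nonempty f)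

theorem exists_pos_mapsHomeomorphically_connectedComponentIn [TopologicalSpace E]
    [PseudoMetricSpace X] [CompactSpace X] (hf : IsCoveringMap f) (hsurj : Surjective f) :
    ∃ δ > 0, ∀ C : Set X, IsPreconnected C → diam C < δ → ∀ x ∈ f ⁻¹' C,
      MapsHomeomorphically f (connectedComponentIn (f ⁻¹' C) x) C := by
  have (p : X) : Nonempty (f ⁻¹' {p}) := let ⟨y, hy⟩ := hsurj p; ⟨⟨y, hy⟩⟩
  obtain ⟨δ, hδ, hball⟩ := lebesgue_number_lemma_of_metric isCompact_univ
    (fun p => (hf p).toTrivialization.open_baseSet)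
    (fun p _ => mem_iUnion.2 ⟨p, (hf p).mem_toTrivialization_baseSet⟩)
  refine ⟨δ, hδ, fun C hC hCδ x hx => ?_⟩
  obtain ⟨p, hp⟩ := hball (f x) (mem_univ _)
  have hCball : C ⊆ ball (f x) δ := fun c hc =>
    mem_ball.2 ((dist_le_diam_of_mem isBounded_of_compactSpace hc hx).trans_lt hCδ)
  have := (hf p).1
  exact (hf p).toTrivialization.mapsHomeomorphically_connectedComponentIn_preimage hC
    (hCball.trans hp) hx

theorem exists_pos_diam_le_and_mapsHomeomorphically [PseudoMetricSpace E] [PseudoMetricSpace X]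
    [CompactSpace X] (hf : IsCoveringMap f) (hsurj : Surjective f) {ε lam : ℝ} (hε : 0 < ε)
    (hlam : 1 < lam) (hexp : ∀ p q : E, dist p q < ε → lam * dist p q ≤ dist (f p) (f q)) :
    ∃ δ > 0, ∀ C : Set X, IsPreconnected C → diam C < δ → ∀ x ∈ f ⁻¹' C,
      diam (connectedComponentIn (f ⁻¹' C) x) ≤ lam⁻¹ * diam C ∧
      MapsHomeomorphically f (connectedComponentIn (f ⁻¹' C) x) C := by
  obtain ⟨δ, hδ, hsheet⟩ := hf.exists_pos_mapsHomeomorphically_connectedComponentIn hsurj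
  refine ⟨min δ ε, lt_min hδ hε, fun C hC hCδ x hx =>
    ⟨?_, hsheet C hC (hCδ.trans_le (min_le_left _ _)) x hx⟩⟩
  exact diam_le_inv_mul_diam_of_mapsTo (one_pos.trans hlam) hexp
    isPreconnected_connectedComponentIn (connectedComponentIn_subset _ x)
    isBounded_of_compactSpace
    (hCδ.trans_le ((min_le_right _ _).trans (le_mul_of_one_le_left hε.le hlam.le)))

end IsCoveringMap

theorem stmt15_general {X : Type*} [MetricSpace X] [CompactSpace X] [ConnectedSpace X]
    (f : X → X) (hf : IsCoveringMap f) (ε lam : ℝ) (hε : 0 < ε) (hlam : 1 < lam)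
    (hexp : ∀ p q : X, dist p q < ε → lam * dist p q ≤ dist (f p) (f q)) :
    ∃ δ : ℝ, 0 < δ ∧ ∀ C : Set X, IsConnected C → Metric.diam C < δ →
      ∀ n : ℕ, 1 ≤ n → ∀ x ∈ (f^[n]) ⁻¹' C,
        Metric.diam (connectedComponentIn ((f^[n]) ⁻¹' C) x) ≤ (lam ^ n)⁻¹ * Metric.diam C ∧
        ∃ e : ↥(connectedComponentIn ((f^[n]) ⁻¹' C) x) ≃ₜ ↥C,
          ∀ z : ↥(connectedComponentIn ((f^[n]) ⁻¹' C) x), (e z : X) = f^[n] (z : X) := by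
  obtain ⟨δ, hδ, hstep⟩ :=
    hf.exists_pos_diam_le_and_mapsHomeomorphically hf.surjective_of_compactSpace hε hlam hexp
  refine ⟨δ, hδ, fun C hC hCδ n hn => ?_⟩
  clear hn
  induction n with
  | zero =>
    intro x hx
    rw [iterate_zero, preimage_id, hC.isPreconnected.connectedComponentIn hx]
    exact ⟨by rw [pow_zero, inv_one, one_mul], Homeomorph.refl C, fun _ => rfl⟩
  | succ n ih =>
    intro x hx
    have hfx : x ∈ f ⁻¹' (f^[n] ⁻¹' C) := hx
    set K := connectedComponentIn (f^[n] ⁻¹' C) (f x)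
    obtain ⟨hKdiam, hK⟩ := ih (f x) hfx
    have hKδ : diam K < δ := (hKdiam.trans (mul_le_of_le_one_left diam_nonneg
      (inv_le_one_of_one_le₀ (one_le_pow₀ hlam.le)))).trans_lt hCδ
    obtain ⟨hdiam, hsheet⟩ :=
      hstep K isPreconnected_connectedComponentIn hKδ x (mem_connectedComponentIn hfx)
    rw [iterate_succ, preimage_comp,
      ← connectedComponentIn_preimage_connectedComponentIn hf.continuous hfx]
    refine ⟨hdiam.trans ?_, MapsHomeomorphically.comp hK hsheet⟩
    rw [pow_succ', mul_inv, mul_assoc]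
    gcongr

/-- Let `f : X → X` be an expanding covering map of a compact,
connected, locally connected metric space (expanding with constants `ε > 0`,
`lam > 1`).  Then there is `δ > 0` such that for every connected `C` of diameter
`< δ` and every `n ≥ 1`, each component of `f^[n] ⁻¹' C` has diameter at most
`lam⁻ⁿ · diam C` and is mapped homeomorphically onto `C` by `f^[n]`. -/
theorem stmt15 {X : Type*} [MetricSpace X] [CompactSpace X] [ConnectedSpace X]
    [LocallyConnectedSpace X]
    (f : X → X) (hf : IsCoveringMap f) (ε lam : ℝ) (hε : 0 < ε) (hlam : 1 < lam)
    (hexp : ∀ p q : X, dist p q < ε → lam * dist p q ≤ dist (f p) (f q)) :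
    ∃ δ : ℝ, 0 < δ ∧ ∀ C : Set X, IsConnected C → Metric.diam C < δ →
      ∀ n : ℕ, 1 ≤ n → ∀ x ∈ (f^[n]) ⁻¹' C,
        Metric.diam (connectedComponentIn ((f^[n]) ⁻¹' C) x) ≤ (lam ^ n)⁻¹ * Metric.diam C ∧
        ∃ e : ↥(connectedComponentIn ((f^[n]) ⁻¹' C) x) ≃ₜ ↥C,
          ∀ z : ↥(connectedComponentIn ((f^[n]) ⁻¹' C) x), (e z : X) = f^[n] (z : X) :=
  stmt15_general f hf ε lam hε hlam hexp
end

section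
/- Let X be a set, let g₀ and g₁ be bijections of X, and suppose there exists a subset R ⊆ X such that: (1) g₀(R) is a proper subset of R; (2) g₁ is the identity on X ∖ R; (3) g₁ agrees with g₀ on g₀(R). Then, in the permutation group of X, the relations g₀²g₁g₀⁻² = (g₁g₀)g₁(g₁g₀)⁻¹ and g₀³g₁g₀⁻³ = (g₁g₀²)g₁(g₁g₀²)⁻¹ hold, and moreover g₀ and g₁ do not commute: g₀g₁ ≠ g₁g₀. -/
/-!
Conjugating `g₁` by `g₀ ^ (n + 1)` instead of by `g₁ * g₀ ^ n` changes the conjugator by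
`c = g₀⁻ⁿ g₁⁻¹ g₀ⁿ⁺¹`. Since `g₁` agrees with `g₀` on `g₀ R ⊇ g₀ⁿ R`, the element `c` fixes `R`
pointwise, while `g₁` fixes the complement of `R`; so `c` and `g₁` have disjoint supports and
commute, which is the relation. If `g₀` and `g₁` commuted, a point `r ∈ R ∖ g₀ R` would be fixed by
`g₁` (as `g₀⁻¹ r ∉ R`), and then `g₀ r = g₁ (g₀ r) = g₀ (g₀ r)` would force `r = g₀ r ∈ g₀ R`.
-/

open Set

theorem conj_eq_conj_of_commute {G : Type*} [Group G] {a b g : G} (h : Commute (b⁻¹ * a) g) :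
    a * g * a⁻¹ = b * g * b⁻¹ := by
  calc a * g * a⁻¹ = b * ((b⁻¹ * a) * g * (b⁻¹ * a)⁻¹) * b⁻¹ := by group
    _ = b * g * b⁻¹ := by rw [h.eq, mul_inv_cancel_right]

namespace Equiv.Perm

theorem disjoint_of_eqOn_compl {X : Type*} {f g : Perm X} {R : Set X}
    (hf : ∀ x ∈ R, f x = x) (hg : ∀ x ∉ R, g x = x) : f.Disjoint g := fun x =>
  (em (x ∈ R)).imp (hf x) (hg x)

variable {X : Type*} {g₀ g₁ : Perm X} {R : Set X}

theorem apply_pow_succ_eq_of_eqOn_image (hR : MapsTo g₀ R R)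
    (h3 : ∀ x ∈ g₀ '' R, g₁ x = g₀ x) (n : ℕ) {x : X} (hx : x ∈ R) :
    g₁ ((g₀ ^ (n + 1)) x) = (g₀ ^ (n + 2)) x := by
  have hn : (g₀ ^ n) x ∈ R := by
    rw [coe_pow]
    exact hR.iterate n hx
  rw [pow_succ' _ (n + 1), mul_apply, pow_succ', mul_apply]
  exact h3 _ (mem_image_of_mem g₀ hn)

theorem conj_pow_succ_eq_conj_mul_pow (hR : MapsTo g₀ R R) (h2 : ∀ x ∉ R, g₁ x = x)
    (h3 : ∀ x ∈ g₀ '' R, g₁ x = g₀ x) (n : ℕ) :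
    g₀ ^ (n + 2) * g₁ * (g₀ ^ (n + 2))⁻¹ =
      (g₁ * g₀ ^ (n + 1)) * g₁ * (g₁ * g₀ ^ (n + 1))⁻¹ := by
  refine conj_eq_conj_of_commute (Disjoint.commute (disjoint_of_eqOn_compl ?_ h2))
  intro x hx
  rw [mul_apply, ← apply_pow_succ_eq_of_eqOn_image hR h3 n hx, mul_inv_rev, mul_apply]
  simp only [coe_inv, symm_apply_apply]

theorem mul_ne_mul_of_image_ssubset (h1 : g₀ '' R ⊂ R) (h2 : ∀ x ∉ R, g₁ x = x)
    (h3 : ∀ x ∈ g₀ '' R, g₁ x = g₀ x) : g₀ * g₁ ≠ g₁ * g₀ := by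
  intro hcomm
  obtain ⟨r, hrR, hr⟩ := exists_of_ssubset h1
  have hpre : g₀⁻¹ r ∉ R := fun h => hr ⟨g₀⁻¹ r, h, g₀.apply_symm_apply r⟩
  have hfix : g₁ r = r :=
    calc g₁ r = (g₁ * g₀) (g₀⁻¹ r) := by simp [mul_apply]
      _ = (g₀ * g₁) (g₀⁻¹ r) := by rw [hcomm]
      _ = r := by rw [mul_apply, h2 _ hpre]; simp
  have hmove : g₀ r = g₀ (g₀ r) :=
    calc g₀ r = (g₀ * g₁) r := by rw [mul_apply, hfix]
      _ = (g₁ * g₀) r := by rw [hcomm]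
      _ = g₀ (g₀ r) := h3 _ (mem_image_of_mem g₀ hrR)
  exact hr ⟨r, hrR, (g₀.injective hmove).symm⟩

end Equiv.Perm

/-- If `g₀, g₁` are bijections of a set `X` and `R ⊆ X` satisfies the
ping-pong hypotheses for Thompson's group `F`, then the two defining relations of `F`
hold for `g₀, g₁` in the permutation group of `X`, and `g₀` and `g₁` do not commute. -/
theorem stmt17 {X : Type*} (g₀ g₁ : Equiv.Perm X) (R : Set X)
    (h1 : (⇑g₀) '' R ⊂ R) (h2 : ∀ x ∉ R, g₁ x = x)
    (h3 : ∀ x ∈ (⇑g₀) '' R, g₁ x = g₀ x) :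
    (g₀ ^ 2 * g₁ * (g₀ ^ 2)⁻¹ = (g₁ * g₀) * g₁ * (g₁ * g₀)⁻¹ ∧
      g₀ ^ 3 * g₁ * (g₀ ^ 3)⁻¹ = (g₁ * g₀ ^ 2) * g₁ * (g₁ * g₀ ^ 2)⁻¹) ∧
    g₀ * g₁ ≠ g₁ * g₀ := by
  have hR : MapsTo g₀ R R := mapsTo_iff_image_subset.mpr h1.subset
  refine ⟨⟨?_, Equiv.Perm.conj_pow_succ_eq_conj_mul_pow hR h2 h3 1⟩,
    Equiv.Perm.mul_ne_mul_of_image_ssubset h1 h2 h3⟩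
  simpa using Equiv.Perm.conj_pow_succ_eq_conj_mul_pow hR h2 h3 0
end
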